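/- arXiv:math/0401329 — 8 statements merged into one kernel-verified Lean document; each statement's English description precedes it below -/
import Mathlib

section
/- Let (s, λ/μ) be a placed skew shape with n cells and let (γ, J) be its associated pair. Then the map p ↦ w_p, where w_p ∈ Sₙ is the permutation defined by w_p(i) = p(boxᵢ) for 1 ≤ i ≤ n, is a bijection from the set of standard tableaux of shape λ/μ onto F^{(γ,J)}. -/
namespace Stmt3

variable {n : ℕ}

/-- The inversion set `R(w) = {(i,j) : i < j, w i > w j}`. -/
def invSet (w : Equiv.Perm (Fin n)) : Set (Fin n × Fin n) :=
  {p | p.1 < p.2 ∧ w p.2 < w p.1}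

/-- `Z(γ) = {(i,j) : i < j, γ i = γ j}`. -/
def Zset (γ : Fin n → ℤ) : Set (Fin n × Fin n) :=
  {p | p.1 < p.2 ∧ γ p.1 = γ p.2}

/-- `P(γ) = {(i,j) : i < j, γ j = γ i + 1}`. -/
def Pset (γ : Fin n → ℤ) : Set (Fin n × Fin n) :=
  {p | p.1 < p.2 ∧ γ p.2 = γ p.1 + 1}

/-- `F^{(γ,J)} = {w : R(w) ∩ Z(γ) = ∅, R(w) ∩ P(γ) = J}`. -/
def Fset (γ : Fin n → ℤ) (J : Set (Fin n × Fin n)) : Set (Equiv.Perm (Fin n)) :=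
  {w | invSet w ∩ Zset γ = ∅ ∧ invSet w ∩ Pset γ = J}

/-- The cells of the skew shape `λ/μ` (rows and columns indexed from `0`):
cell `(r,c)` belongs to `λ/μ` iff `μ r ≤ c < λ r`. -/
def cellsOf (lam mu : ℕ → ℕ) : Set (ℕ × ℕ) :=
  {b | mu b.1 ≤ b.2 ∧ b.2 < lam b.1}

/-- The content `c − r + s` of a cell `(r,c)` of a shape placed at `s`.
(With `0`-indexed rows and columns this agrees with the `1`-indexed convention.) -/
def contentAt (s : ℤ) (b : ℕ × ℕ) : ℤ := (b.2 : ℤ) - (b.1 : ℤ) + s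

/-- A standard tableau of a skew shape, as a bijective filling of the cells by
`Fin n` increasing along rows and columns. -/
def IsStdTableau (lam mu : ℕ → ℕ) (p : {b // b ∈ cellsOf lam mu} → Fin n) : Prop :=
  Function.Bijective p ∧
  (∀ b b' : {b // b ∈ cellsOf lam mu},
      b'.1.1 = b.1.1 → b'.1.2 = b.1.2 + 1 → p b < p b') ∧
  (∀ b b' : {b // b ∈ cellsOf lam mu},
      b'.1.1 = b.1.1 + 1 → b'.1.2 = b.1.2 → p b < p b')

lemma row_chain {lam mu : ℕ → ℕ}
    (p : {b // b ∈ cellsOf lam mu} → Fin n)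
    (hrow : ∀ b b' : {b // b ∈ cellsOf lam mu},
      b'.1.1 = b.1.1 → b'.1.2 = b.1.2 + 1 → p b < p b')
    (k : ℕ) : ∀ b b' : {b // b ∈ cellsOf lam mu},
      b'.1.1 = b.1.1 → b'.1.2 = b.1.2 + k + 1 → p b < p b' := by
  induction k with
  | zero => intro b b' h1 h2; exact hrow b b' h1 h2
  | succ k ih =>
    intro b b' h1 h2
    have hb := b.2
    have hb' := b'.2
    simp only [cellsOf, Set.mem_setOf_eq] at hb hb'
    have hm : (b.1.1, b.1.2 + k + 1) ∈ cellsOf lam mu := by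
      constructor
      · exact le_trans hb.1 (by omega)
      · simp only []
        rw [h1] at hb'
        omega
    exact lt_trans (ih b ⟨_, hm⟩ rfl rfl)
      (hrow ⟨_, hm⟩ b' h1 (by simpa using by omega))

lemma col_chain {lam mu : ℕ → ℕ} (hlam : Antitone lam) (hmu : Antitone mu)
    (p : {b // b ∈ cellsOf lam mu} → Fin n)
    (hcol : ∀ b b' : {b // b ∈ cellsOf lam mu},
      b'.1.1 = b.1.1 + 1 → b'.1.2 = b.1.2 → p b < p b')
    (k : ℕ) : ∀ b b' : {b // b ∈ cellsOf lam mu},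
      b'.1.1 = b.1.1 + k + 1 → b'.1.2 = b.1.2 → p b < p b' := by
  induction k with
  | zero => intro b b' h1 h2; exact hcol b b' h1 h2
  | succ k ih =>
    intro b b' h1 h2
    have hb := b.2
    have hb' := b'.2
    simp only [cellsOf, Set.mem_setOf_eq] at hb hb'
    have hm : (b.1.1 + k + 1, b.1.2) ∈ cellsOf lam mu := by
      constructor
      · exact le_trans (hmu (by omega : b.1.1 ≤ b.1.1 + k + 1)) hb.1
      · have : lam b'.1.1 ≤ lam (b.1.1 + k + 1) := hlam (by omega)
        rw [h2] at hb'
        simp only []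
        omega
    exact lt_trans (ih b ⟨_, hm⟩ rfl rfl)
      (hcol ⟨_, hm⟩ b' (by simpa using by omega) h2)

lemma se_lt {lam mu : ℕ → ℕ} (hlam : Antitone lam) (hmu : Antitone mu)
    (p : {b // b ∈ cellsOf lam mu} → Fin n)
    (hrow : ∀ b b' : {b // b ∈ cellsOf lam mu},
      b'.1.1 = b.1.1 → b'.1.2 = b.1.2 + 1 → p b < p b')
    (hcol : ∀ b b' : {b // b ∈ cellsOf lam mu},
      b'.1.1 = b.1.1 + 1 → b'.1.2 = b.1.2 → p b < p b')
    (b b' : {b // b ∈ cellsOf lam mu})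
    (hr : b.1.1 ≤ b'.1.1) (hc : b.1.2 ≤ b'.1.2) (hne : b.1 ≠ b'.1) :
    p b < p b' := by
  rcases eq_or_lt_of_le hr with h | h
  · have hcc : b.1.2 < b'.1.2 := by
      rcases lt_or_eq_of_le hc with h' | h'
      · exact h'
      · exfalso; exact hne (Prod.ext h.symm h'.symm ▸ rfl)
    exact row_chain p hrow (b'.1.2 - b.1.2 - 1) b b' h.symm (by omega)
  · have hb := b.2
    have hb' := b'.2
    simp only [cellsOf, Set.mem_setOf_eq] at hb hb'
    have hm : (b'.1.1, b.1.2) ∈ cellsOf lam mu := by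
      constructor
      · exact le_trans (hmu (le_of_lt h)) hb.1
      · exact lt_of_le_of_lt hc hb'.2
    have h1 : p b < p ⟨_, hm⟩ :=
      col_chain hlam hmu p hcol (b'.1.1 - b.1.1 - 1) b ⟨_, hm⟩
        (show b'.1.1 = b.1.1 + (b'.1.1 - b.1.1 - 1) + 1 by omega) rfl
    rcases lt_or_eq_of_le hc with h' | h'
    · exact lt_trans h1 (row_chain p hrow (b'.1.2 - b.1.2 - 1) ⟨_, hm⟩ b' rfl
        (show b'.1.2 = b.1.2 + (b'.1.2 - b.1.2 - 1) + 1 by omega))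
    · have : (⟨_, hm⟩ : {b // b ∈ cellsOf lam mu}) = b' := Subtype.ext (Prod.ext rfl h')
      rwa [this] at h1


theorem stmt3 (s : ℤ) (lam mu : ℕ → ℕ)
    (hlam : Antitone lam) (hmu : Antitone mu) (hsub : ∀ r, mu r ≤ lam r)
    (hfin : ∃ N, ∀ r, N ≤ r → lam r = 0)
    -- the enumeration `box₁, …, boxₙ` of the cells, ordered by content and then by row
    (box : Fin n → ℕ × ℕ)
    (hbox_mem : ∀ i, box i ∈ cellsOf lam mu)
    (hbox_surj : ∀ b ∈ cellsOf lam mu, ∃ i, box i = b)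
    (hbox_sorted : ∀ i j : Fin n, i < j →
        contentAt s (box i) < contentAt s (box j) ∨
        (contentAt s (box i) = contentAt s (box j) ∧ (box i).1 < (box j).1))
    -- the associated pair `(γ, J)`
    (γ : Fin n → ℤ) (hγ : ∀ i, γ i = contentAt s (box i))
    (J : Set (Fin n × Fin n))
    (hJ : J = {p : Fin n × Fin n | p.1 < p.2 ∧
        contentAt s (box p.2) = contentAt s (box p.1) + 1 ∧
        (box p.2).1 < (box p.1).1 ∧ (box p.2).2 ≤ (box p.1).2}) :
    Set.BijOn
      (fun (p : {b // b ∈ cellsOf lam mu} → Fin n) =>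
        (fun i : Fin n => p ⟨box i, hbox_mem i⟩ : Fin n → Fin n))
      {p | IsStdTableau lam mu p}
      ((fun w : Equiv.Perm (Fin n) => (w : Fin n → Fin n)) '' Fset γ J) := by
  classical
  -- box is injective
  have hbox_inj : Function.Injective box := by
    intro i j hij
    by_contra hne
    rcases lt_or_gt_of_ne hne with h | h
    · rcases hbox_sorted i j h with h' | ⟨_, h'⟩ <;> rw [hij] at h' <;> exact lt_irrefl _ h'
    · rcases hbox_sorted j i h with h' | ⟨_, h'⟩ <;> rw [hij] at h' <;> exact lt_irrefl _ h'
  set bm : Fin n → {b // b ∈ cellsOf lam mu} := fun i => ⟨box i, hbox_mem i⟩ with hbm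
  have hbm_bij : Function.Bijective bm := by
    constructor
    · intro i j h; exact hbox_inj (congrArg Subtype.val h)
    · rintro ⟨b, hb⟩; obtain ⟨i, hi⟩ := hbox_surj b hb; exact ⟨i, Subtype.ext hi⟩
  set e : Fin n ≃ {b // b ∈ cellsOf lam mu} := Equiv.ofBijective bm hbm_bij with he
  have idx_lt : ∀ i j : Fin n,
      (contentAt s (box i) < contentAt s (box j) ∨
        (contentAt s (box i) = contentAt s (box j) ∧ (box i).1 < (box j).1)) → i < j := by
    intro i j h
    rcases lt_trichotomy i j with h' | h' | h'
    · exact h'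
    · subst h'
      rcases h with h | ⟨_, h⟩ <;> exact absurd h (lt_irrefl _)
    · exfalso
      rcases hbox_sorted j i h' with h2 | ⟨h2a, h2b⟩ <;> rcases h with h | ⟨ha, hb⟩ <;> omega
  refine ⟨?_, ?_, ?_⟩
  · -- MapsTo
    intro p hp
    obtain ⟨hbij, hrow, hcol⟩ := hp
    have hf : Function.Bijective (fun i => p (bm i)) := hbij.comp hbm_bij
    refine ⟨Equiv.ofBijective _ hf, ⟨?_, ?_⟩, rfl⟩
    · -- no inversions in Z
      ext ⟨i, j⟩
      simp only [invSet, Zset, Set.mem_inter_iff, Set.mem_setOf_eq, Set.mem_empty_iff_false,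
        iff_false]
      rintro ⟨⟨hij, hw⟩, ⟨-, hz⟩⟩
      rw [hγ, hγ] at hz
      have hr : (box i).1 < (box j).1 := by
        rcases hbox_sorted i j hij with h | ⟨_, h⟩
        · omega
        · exact h
      have hc : (box i).2 < (box j).2 := by
        simp only [contentAt] at hz; omega
      have := se_lt hlam hmu p hrow hcol (bm i) (bm j) (le_of_lt hr) (le_of_lt hc)
        (by intro h; rw [show (bm i).1 = box i from rfl, show (bm j).1 = box j from rfl] at h
            exact absurd (congrArg Prod.fst h) (ne_of_lt hr))
      exact absurd hw (not_lt_of_gt this)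
    · -- inversions in P are exactly J
      ext ⟨i, j⟩
      simp only [invSet, Pset, Set.mem_inter_iff, Set.mem_setOf_eq, hJ]
      constructor
      · rintro ⟨⟨hij, hw⟩, ⟨-, hpp⟩⟩
        rw [hγ, hγ] at hpp
        refine ⟨hij, hpp, ?_⟩
        have hrj : (box j).1 < (box i).1 := by
          by_contra hle
          push_neg at hle
          have hc : (box i).2 < (box j).2 := by
            simp only [contentAt] at hpp; omega
          have := se_lt hlam hmu p hrow hcol (bm i) (bm j) hle (le_of_lt hc)
            (by intro h; exact absurd (congrArg Prod.snd h) (ne_of_lt hc))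
          exact absurd hw (not_lt_of_gt this)
        refine ⟨hrj, ?_⟩
        simp only [contentAt] at hpp; omega
      · rintro ⟨hij, hcont, hr, hc⟩
        refine ⟨⟨hij, ?_⟩, hij, by rw [hγ, hγ]; exact hcont⟩
        exact se_lt hlam hmu p hrow hcol (bm j) (bm i) (le_of_lt hr) hc
          (by intro h; exact absurd (congrArg Prod.fst h) (ne_of_lt hr))
  · -- InjOn
    intro p _ q _ h
    funext b
    obtain ⟨i, hi⟩ := hbm_bij.2 b
    rw [← hi]
    exact congrFun h i
  · -- SurjOn
    rintro f ⟨w, hw, rfl⟩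
    obtain ⟨hwZ, hwP⟩ := hw
    set p : {b // b ∈ cellsOf lam mu} → Fin n := fun b => w (e.symm b) with hpdef
    have hbval : ∀ b : {b // b ∈ cellsOf lam mu}, box (e.symm b) = b.1 := by
      intro b
      exact congrArg Subtype.val (e.apply_symm_apply b)
    have key_lt : ∀ b b' : {b // b ∈ cellsOf lam mu},
        contentAt s (box (e.symm b)) < contentAt s (box (e.symm b')) → e.symm b < e.symm b' := by
      intro b b' h
      exact idx_lt _ _ (Or.inl h)
    refine ⟨p, ⟨?_, ?_, ?_⟩, ?_⟩
    · exact w.bijective.comp e.symm.bijective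
    · -- rows increase
      intro b b' h1 h2
      set i := e.symm b
      set j := e.symm b'
      have hcij : contentAt s (box j) = contentAt s (box i) + 1 := by
        rw [hbval b, hbval b'] at *
        simp only [contentAt]
        omega
      have hij : i < j := idx_lt i j (Or.inl (by omega))
      have hnotJ : (i, j) ∉ J := by
        rw [hJ]
        rintro ⟨-, -, hr, -⟩
        rw [hbval b, hbval b', h1] at hr
        exact lt_irrefl _ hr
      have hnotinv : (i, j) ∉ invSet w := by
        intro hin
        exact hnotJ (hwP ▸ Set.mem_inter hin ⟨hij, by rw [hγ, hγ]; exact hcij⟩)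
      simp only [invSet, Set.mem_setOf_eq, not_and, not_lt] at hnotinv
      have hle : w i ≤ w j := hnotinv hij
      have hne : w i ≠ w j := fun h => absurd (w.injective h) (ne_of_lt hij)
      exact lt_of_le_of_ne hle hne
    · -- columns increase
      intro b b' h1 h2
      set i := e.symm b
      set j := e.symm b'
      have hcij : contentAt s (box i) = contentAt s (box j) + 1 := by
        rw [hbval b, hbval b'] at *
        simp only [contentAt]
        omega
      have hji : j < i := idx_lt j i (Or.inl (by omega))
      have hinJ : (j, i) ∈ J := by
        rw [hJ]
        refine ⟨hji, hcij, ?_, ?_⟩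
        · rw [hbval b, hbval b', h1]; omega
        · rw [hbval b, hbval b', h2]
      rw [← hwP] at hinJ
      exact hinJ.1.2
    · funext i
      show w (e.symm (e i)) = w i
      rw [Equiv.symm_apply_apply]

end Stmt3
end

section
/- Let γ ∈ ℝⁿ be dominant and J ⊆ P(γ). Then F^{(γ,J)} = {w ∈ Sₙ : J̄ ⊆ R(w) and R(w) ∩ closure((P(γ)∖J) ∪ Z(γ)) = ∅}, where J̄ is the closure of J and closure((P(γ)∖J) ∪ Z(γ)) is the closure of (P(γ)∖J) ∪ Z(γ). -/
namespace Stmt4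

variable {n : ℕ}

/-- The inversion set `R(w) = {(i,j) : i < j, w i > w j}`. -/
def invSet (w : Equiv.Perm (Fin n)) : Set (Fin n × Fin n) :=
  {p | p.1 < p.2 ∧ w p.2 < w p.1}

/-- `Z(γ) = {(i,j) : i < j, γ i = γ j}`. -/
def Zset (γ : Fin n → ℝ) : Set (Fin n × Fin n) :=
  {p | p.1 < p.2 ∧ γ p.1 = γ p.2}

/-- `P(γ) = {(i,j) : i < j, γ j = γ i + 1}`. -/
def Pset (γ : Fin n → ℝ) : Set (Fin n × Fin n) :=
  {p | p.1 < p.2 ∧ γ p.2 = γ p.1 + 1}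

/-- `F^{(γ,J)} = {w : R(w) ∩ Z(γ) = ∅, R(w) ∩ P(γ) = J}`. -/
def Fset (γ : Fin n → ℝ) (J : Set (Fin n × Fin n)) : Set (Equiv.Perm (Fin n)) :=
  {w | invSet w ∩ Zset γ = ∅ ∧ invSet w ∩ Pset γ = J}

/-- A set of pairs is closed if `(i,j), (j,k) ∈ K` imply `(i,k) ∈ K`. -/
def IsClosedPairs (K : Set (Fin n × Fin n)) : Prop :=
  ∀ i j k : Fin n, (i, j) ∈ K → (j, k) ∈ K → (i, k) ∈ K

/-- The closure of a set of pairs: the smallest closed set containing it. -/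
def pairClosure (K : Set (Fin n × Fin n)) : Set (Fin n × Fin n) :=
  ⋂₀ {L | K ⊆ L ∧ IsClosedPairs L}

theorem stmt4 (γ : Fin n → ℝ) (hdom : Monotone γ)
    (J : Set (Fin n × Fin n)) (hJ : J ⊆ Pset γ) :
    Fset γ J =
      {w | pairClosure J ⊆ invSet w ∧
           invSet w ∩ pairClosure ((Pset γ \ J) ∪ Zset γ) = ∅} := by
  have closure_min : ∀ (K L : Set (Fin n × Fin n)), K ⊆ L → IsClosedPairs L →
      pairClosure K ⊆ L := fun K L h1 h2 => Set.sInter_subset_of_mem ⟨h1, h2⟩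
  have inv_closed : ∀ w : Equiv.Perm (Fin n), IsClosedPairs (invSet w) := by
    intro w i j k ⟨hij, hwij⟩ ⟨hjk, hwjk⟩
    exact ⟨hij.trans hjk, hwjk.trans hwij⟩
  have sub_closure : ∀ K : Set (Fin n × Fin n), K ⊆ pairClosure K := by
    intro K p hp L hL
    exact hL.1 hp
  ext w
  constructor
  · rintro ⟨hZ, hP⟩
    constructor
    · apply closure_min _ _ _ (inv_closed w)
      rw [← hP]; exact Set.inter_subset_left
    · set L : Set (Fin n × Fin n) := {p | p.1 < p.2 ∧ w p.1 < w p.2} with hLdef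
      have hLclosed : IsClosedPairs L := by
        intro i j k ⟨hij, hwij⟩ ⟨hjk, hwjk⟩
        exact ⟨hij.trans hjk, hwij.trans hwjk⟩
      have hsub : (Pset γ \ J) ∪ Zset γ ⊆ L := by
        rintro p (⟨hp, hpJ⟩ | hp)
        · refine ⟨hp.1, ?_⟩
          have hnot : p ∉ invSet w := by
            intro hinv
            exact hpJ (hP ▸ ⟨hinv, hp⟩)
          have hne : w p.1 ≠ w p.2 := fun h => hp.1.ne (w.injective h)
          rcases lt_or_gt_of_ne hne with h | h
          · exact h
          · exact absurd ⟨hp.1, h⟩ hnot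
        · refine ⟨hp.1, ?_⟩
          have hnot : p ∉ invSet w := fun hinv =>
            Set.eq_empty_iff_forall_notMem.mp hZ p ⟨hinv, hp⟩
          have hne : w p.1 ≠ w p.2 := fun h => hp.1.ne (w.injective h)
          rcases lt_or_gt_of_ne hne with h | h
          · exact h
          · exact absurd ⟨hp.1, h⟩ hnot
      have hcl : pairClosure ((Pset γ \ J) ∪ Zset γ) ⊆ L :=
        closure_min _ _ hsub hLclosed
      ext p
      simp only [Set.mem_inter_iff, Set.mem_empty_iff_false, iff_false, not_and]
      intro hinv hclp
      exact absurd hinv.2 (not_lt.mpr (hcl hclp).2.le)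
  · rintro ⟨h1, h2⟩
    have hJR : J ⊆ invSet w := fun p hp => h1 (sub_closure J hp)
    have hdisj : ∀ p, p ∈ invSet w → p ∉ (Pset γ \ J) ∪ Zset γ := by
      intro p hp hmem
      exact Set.eq_empty_iff_forall_notMem.mp h2 p ⟨hp, sub_closure _ hmem⟩
    constructor
    · ext p
      simp only [Set.mem_inter_iff, Set.mem_empty_iff_false, iff_false, not_and]
      intro hinv hz
      exact hdisj p hinv (Or.inr hz)
    · ext p
      constructor
      · rintro ⟨hinv, hps⟩
        by_contra hnJ
        exact hdisj p hinv (Or.inl ⟨hps, hnJ⟩)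
      · intro hp
        exact ⟨hJR hp, hJ hp⟩

end Stmt4
end

section
/- Let γ ∈ ℤⁿ be dominant, J ⊆ P(γ), and suppose F^{(γ,J)} ≠ ∅. Then there is a unique element w_min ∈ F^{(γ,J)} with R(w_min) = J̄ (the closure of J), and R(w_min) ⊆ R(w) for every w ∈ F^{(γ,J)}; that is, w_min is the unique minimal element of F^{(γ,J)} in the weak Bruhat order, where v ≤ w if and only if R(v) ⊆ R(w). -/
namespace Stmt5

variable {n : ℕ}

/-- The inversion set `R(w) = {(i,j) : i < j, w i > w j}`. -/
def invSet (w : Equiv.Perm (Fin n)) : Set (Fin n × Fin n) :=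
  {p | p.1 < p.2 ∧ w p.2 < w p.1}

/-- `Z(γ) = {(i,j) : i < j, γ i = γ j}`. -/
def Zset (γ : Fin n → ℤ) : Set (Fin n × Fin n) :=
  {p | p.1 < p.2 ∧ γ p.1 = γ p.2}

/-- `P(γ) = {(i,j) : i < j, γ j = γ i + 1}`. -/
def Pset (γ : Fin n → ℤ) : Set (Fin n × Fin n) :=
  {p | p.1 < p.2 ∧ γ p.2 = γ p.1 + 1}

/-- `F^{(γ,J)} = {w : R(w) ∩ Z(γ) = ∅, R(w) ∩ P(γ) = J}`. -/
def Fset (γ : Fin n → ℤ) (J : Set (Fin n × Fin n)) : Set (Equiv.Perm (Fin n)) :=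
  {w | invSet w ∩ Zset γ = ∅ ∧ invSet w ∩ Pset γ = J}

/-- A set of pairs is closed if `(i,j), (j,k) ∈ K` imply `(i,k) ∈ K`. -/
def IsClosedPairs (K : Set (Fin n × Fin n)) : Prop :=
  ∀ i j k : Fin n, (i, j) ∈ K → (j, k) ∈ K → (i, k) ∈ K

/-- The closure of a set of pairs: the smallest closed set containing it. -/
def pairClosure (K : Set (Fin n × Fin n)) : Set (Fin n × Fin n) :=
  ⋂₀ {L | K ⊆ L ∧ IsClosedPairs L}

attribute [local instance] Classical.propDecidable

lemma subset_pairClosure (K : Set (Fin n × Fin n)) : K ⊆ pairClosure K := by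
  intro p hp L hL; exact hL.1 hp

lemma pairClosure_closed (K : Set (Fin n × Fin n)) : IsClosedPairs (pairClosure K) := by
  intro i j k hij hjk L hL
  exact hL.2 i j k (hij L hL) (hjk L hL)

lemma pairClosure_min {K L : Set (Fin n × Fin n)} (h : K ⊆ L) (hL : IsClosedPairs L) :
    pairClosure K ⊆ L := fun p hp => hp L ⟨h, hL⟩

lemma invSet_closed (w : Equiv.Perm (Fin n)) : IsClosedPairs (invSet w) := by
  intro i j k hij hjk
  exact ⟨hij.1.trans hjk.1, hjk.2.trans hij.2⟩

open Finset in
lemma val_eq_card (v : Equiv.Perm (Fin n)) (i : Fin n) :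
    (v i : ℕ) = (univ.filter fun j =>
      (j < i ∧ (j, i) ∉ invSet v) ∨ (i < j ∧ (i, j) ∈ invSet v)).card := by
  classical
  have h1 : (univ.filter fun j =>
      (j < i ∧ (j, i) ∉ invSet v) ∨ (i < j ∧ (i, j) ∈ invSet v))
      = univ.filter fun j => v j < v i := by
    ext j
    simp only [mem_filter, mem_univ, true_and, invSet, Set.mem_setOf_eq]
    constructor
    · rintro (⟨hji, hnot⟩ | ⟨hij, _, h⟩)
      · rcases lt_or_ge (v j) (v i) with h | h
        · exact h
        · exact absurd ⟨hji, lt_of_le_of_ne h (fun he => (ne_of_lt hji) (v.injective he.symm))⟩ hnot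
      · exact h
    · intro h
      rcases lt_trichotomy j i with hji | hji | hji
      · exact Or.inl ⟨hji, fun hc => absurd h (not_lt.mpr hc.2.le)⟩
      · exact absurd (hji ▸ h) (lt_irrefl _)
      · exact Or.inr ⟨hji, hji, h⟩
  rw [h1]
  have h2 : (univ.filter fun j => v j < v i).card = (univ.filter fun k => k < v i).card := by
    apply Finset.card_bij' (fun j _ => v j) (fun k _ => v.symm k)
    · intro a ha; simp only [mem_filter, mem_univ, true_and] at ha ⊢; exact ha
    · intro a ha; simp only [mem_filter, mem_univ, true_and] at ha ⊢
      simpa using ha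
    · intro a _; simp
    · intro a _; simp
  rw [h2]
  have h3 : (univ.filter fun k => k < v i) = Finset.Iio (v i) := by
    ext k; simp
  rw [h3, Fin.card_Iio]

lemma perm_eq_of_invSet_eq {v w : Equiv.Perm (Fin n)} (h : invSet v = invSet w) : v = w := by
  ext i
  have h2 := val_eq_card v i
  rw [h, ← val_eq_card w i] at h2
  exact h2

theorem stmt5 (γ : Fin n → ℤ) (hdom : Monotone γ)
    (J : Set (Fin n × Fin n)) (hJ : J ⊆ Pset γ)
    (hne : (Fset γ J).Nonempty) :
    ∃ wmin ∈ Fset γ J,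
      invSet wmin = pairClosure J ∧
      (∀ w ∈ Fset γ J, invSet wmin ⊆ invSet w) ∧
      (∀ w ∈ Fset γ J, invSet w = pairClosure J → w = wmin) := by
  classical
  obtain ⟨w0, hw0Z, hw0P⟩ := hne
  set S : Set (Fin n × Fin n) := pairClosure J with hSdef
  have hScl : IsClosedPairs S := pairClosure_closed J
  have hJS : J ⊆ S := subset_pairClosure J
  -- S is contained in A = pairs with i < j and γ i + 1 ≤ γ j
  have hSA : S ⊆ {p : Fin n × Fin n | p.1 < p.2 ∧ γ p.1 + 1 ≤ γ p.2} := by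
    apply pairClosure_min
    · intro p hp
      obtain ⟨h1, h2⟩ := hJ hp
      exact ⟨h1, le_of_eq h2.symm⟩
    · intro i j k hij hjk
      exact ⟨hij.1.trans hjk.1, by linarith [hij.2, hjk.2]⟩
  -- S ∩ Pset γ ⊆ J
  have hSB : S ⊆ J ∪ {p : Fin n × Fin n | p.1 < p.2 ∧ γ p.1 + 2 ≤ γ p.2} := by
    apply pairClosure_min
    · exact fun p hp => Or.inl hp
    · intro i j k hij hjk
      have d1 : γ i + 1 ≤ γ j := by
        rcases hij with h | h
        · exact le_of_eq (hJ h).2.symm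
        · linarith [h.2]
      have d2 : γ j + 1 ≤ γ k := by
        rcases hjk with h | h
        · exact le_of_eq (hJ h).2.symm
        · linarith [h.2]
      have hik : i < k := by
        have : i < j := by rcases hij with h | h; exacts [(hJ h).1, h.1]
        have h2 : j < k := by rcases hjk with h | h; exacts [(hJ h).1, h.1]
        exact this.trans h2
      exact Or.inr ⟨hik, by linarith⟩
  -- J ⊆ invSet w0
  have hJw0 : J ⊆ invSet w0 := by
    rw [← hw0P]; exact fun p hp => hp.1
  -- co-closedness of S
  have hco : ∀ i j k : Fin n, i < j → j < k → (i, k) ∈ S → (i, j) ∈ S ∨ (j, k) ∈ S := by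
    have hC : S ⊆ {p : Fin n × Fin n | p ∈ S ∧
        ∀ j, p.1 < j → j < p.2 → (p.1, j) ∈ S ∨ (j, p.2) ∈ S} := by
      apply pairClosure_min
      · -- J ⊆ C
        intro p hp
        refine ⟨hJS hp, ?_⟩
        intro j h1 h2
        obtain ⟨hlt, hγ⟩ := hJ hp
        have hinv : p ∈ invSet w0 := hJw0 hp
        have hγj1 : γ p.1 ≤ γ j := hdom h1.le
        have hγj2 : γ j ≤ γ p.2 := hdom h2.le
        rcases lt_or_ge (w0 j) (w0 p.1) with hw | hw
        · -- (p.1, j) is an inversion of w0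
          have hmem : (p.1, j) ∈ invSet w0 := ⟨h1, hw⟩
          have hne : γ p.1 ≠ γ j := by
            intro he
            have : (p.1, j) ∈ invSet w0 ∩ Zset γ := ⟨hmem, h1, he⟩
            rw [hw0Z] at this; exact this
          have : γ j = γ p.1 + 1 := by omega
          have : (p.1, j) ∈ invSet w0 ∩ Pset γ := ⟨hmem, h1, this⟩
          rw [hw0P] at this
          exact Or.inl (hJS this)
        · -- (j, p.2) is an inversion of w0
          have hw' : w0 p.2 < w0 j := lt_of_lt_of_le hinv.2 hw
          have hmem : (j, p.2) ∈ invSet w0 := ⟨h2, hw'⟩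
          have hne : γ j ≠ γ p.2 := by
            intro he
            have : (j, p.2) ∈ invSet w0 ∩ Zset γ := ⟨hmem, h2, he⟩
            rw [hw0Z] at this; exact this
          have : γ p.2 = γ j + 1 := by omega
          have : (j, p.2) ∈ invSet w0 ∩ Pset γ := ⟨hmem, h2, this⟩
          rw [hw0P] at this
          exact Or.inr (hJS this)
      · -- C is closed
        intro i j' k hij hjk
        refine ⟨hScl i j' k hij.1 hjk.1, ?_⟩
        intro j h1 h2
        rcases lt_trichotomy j j' with h | h | h
        · rcases hij.2 j h1 h with hl | hr
          · exact Or.inl hl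
          · exact Or.inr (hScl j j' k hr hjk.1)
        · subst h; exact Or.inl hij.1
        · rcases hjk.2 j h h2 with hl | hr
          · exact Or.inl (hScl i j' j hij.1 hl)
          · exact Or.inr hr
    intro i j k h1 h2 hik
    exact (hC hik).2 j h1 h2
  -- the strict order r
  set r : Fin n → Fin n → Prop :=
    fun a b => (a < b ∧ (a, b) ∉ S) ∨ (b < a ∧ (b, a) ∈ S) with hrdef
  have rirrefl : ∀ a, ¬ r a a := by
    intro a h; rcases h with h | h <;> exact lt_irrefl _ h.1
  have rtri : ∀ a b, a ≠ b → r a b ∨ r b a := by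
    intro a b hab
    rcases lt_or_gt_of_ne hab with h | h
    · by_cases hs : (a, b) ∈ S
      · exact Or.inr (Or.inr ⟨h, hs⟩)
      · exact Or.inl (Or.inl ⟨h, hs⟩)
    · by_cases hs : (b, a) ∈ S
      · exact Or.inl (Or.inr ⟨h, hs⟩)
      · exact Or.inr (Or.inl ⟨h, hs⟩)
  have rtrans : ∀ a b c, r a b → r b c → r a c := by
    intro i j k hij hjk
    rcases hij with ⟨h1, hs1⟩ | ⟨h1, hs1⟩ <;> rcases hjk with ⟨h2, hs2⟩ | ⟨h2, hs2⟩
    · -- i<j, (i,j)∉S ; j<k, (j,k)∉S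
      refine Or.inl ⟨h1.trans h2, fun hc => ?_⟩
      rcases hco i j k h1 h2 hc with h | h
      exacts [hs1 h, hs2 h]
    · -- i<j, (i,j)∉S ; k<j, (k,j)∈S
      rcases lt_trichotomy i k with h | h | h
      · refine Or.inl ⟨h, fun hc => hs1 (hScl i k j hc hs2)⟩
      · subst h; exact absurd hs2 hs1
      · rcases hco k i j h h1 hs2 with hl | hr
        · exact Or.inr ⟨h, hl⟩
        · exact absurd hr hs1
    · -- j<i, (j,i)∈S ; j<k, (j,k)∉S
      rcases lt_trichotomy i k with h | h | h
      · refine Or.inl ⟨h, fun hc => hs2 (hScl j i k hs1 hc)⟩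
      · subst h; exact absurd hs1 hs2
      · rcases hco j k i h2 h hs1 with hl | hr
        · exact absurd hl hs2
        · exact Or.inr ⟨h, hr⟩
    · -- j<i, (j,i)∈S ; k<j, (k,j)∈S
      exact Or.inr ⟨h2.trans h1, hScl k j i hs2 hs1⟩
  -- build the permutation
  have hcard : ∀ i : Fin n, (Finset.univ.filter fun j => r j i).card < n := by
    intro i
    have hsub : (Finset.univ.filter fun j => r j i) ⊂ Finset.univ := by
      refine Finset.ssubset_univ_iff.mpr ?_
      intro he
      have : i ∈ Finset.univ.filter fun j => r j i := by rw [he]; exact Finset.mem_univ i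
      exact rirrefl i (Finset.mem_filter.mp this).2
    simpa using Finset.card_lt_card hsub
  set f : Fin n → Fin n := fun i => ⟨(Finset.univ.filter fun j => r j i).card, hcard i⟩
    with hfdef
  have hmono : ∀ a b, r a b → f a < f b := by
    intro a b hab
    have hsub : (Finset.univ.filter fun j => r j a) ⊂ (Finset.univ.filter fun j => r j b) := by
      constructor
      · intro j hj
        simp only [Finset.mem_filter, Finset.mem_univ, true_and] at hj ⊢
        exact rtrans j a b hj hab
      · intro hle
        have : a ∈ Finset.univ.filter fun j => r j b := by
          simp only [Finset.mem_filter, Finset.mem_univ, true_and]; exact hab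
        have := hle this
        simp only [Finset.mem_filter, Finset.mem_univ, true_and] at this
        exact rirrefl a this
    exact Finset.card_lt_card hsub
  have finj : Function.Injective f := by
    intro a b hab
    by_contra hne
    rcases rtri a b hne with h | h
    · exact absurd (hab ▸ hmono a b h) (lt_irrefl _)
    · exact absurd (hab ▸ hmono b a h) (lt_irrefl _)
  set wmin : Equiv.Perm (Fin n) :=
    Equiv.ofBijective f (Finite.injective_iff_bijective.mp finj) with hwmdef
  have hwapp : ∀ i, wmin i = f i := fun i => rfl
  have hflt : ∀ a b, f a < f b → r a b := by
    intro a b h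
    by_contra hnot
    have hne : a ≠ b := fun he => by rw [he] at h; exact lt_irrefl _ h
    rcases rtri a b hne with hr | hr
    · exact hnot hr
    · exact absurd (hmono b a hr) (not_lt.mpr h.le)
  have hwinv : invSet wmin = S := by
    ext p
    simp only [invSet, Set.mem_setOf_eq, hwapp]
    constructor
    · rintro ⟨hlt, hv⟩
      rcases hflt p.2 p.1 hv with h | h
      · exact absurd h.1 (not_lt.mpr hlt.le)
      · exact h.2
    · intro hp
      have hlt := (hSA hp).1
      exact ⟨hlt, hmono p.2 p.1 (Or.inr ⟨hlt, hp⟩)⟩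
  refine ⟨wmin, ⟨?_, ?_⟩, hwinv, ?_, ?_⟩
  · -- invSet wmin ∩ Zset γ = ∅
    rw [hwinv]
    ext p
    simp only [Set.mem_inter_iff, Set.mem_empty_iff_false, iff_false, not_and]
    intro hp hz
    have := (hSA hp).2
    have := hz.2
    omega
  · -- invSet wmin ∩ Pset γ = J
    rw [hwinv]
    ext p
    simp only [Set.mem_inter_iff]
    constructor
    · rintro ⟨hs, hp⟩
      rcases hSB hs with h | h
      · exact h
      · exfalso; have := hp.2; have := h.2; omega
    · intro hp
      exact ⟨hJS hp, hJ hp⟩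
  · -- minimality
    intro w hw
    rw [hwinv]
    have hJw : J ⊆ invSet w := by
      rw [← hw.2]; exact fun p hp => hp.1
    exact pairClosure_min hJw (invSet_closed w)
  · -- uniqueness
    intro w _ hwS
    exact perm_eq_of_invSet_eq (hwS.trans hwinv.symm)


end Stmt5
end

section
/- Let γ ∈ ℤⁿ be dominant, J ⊆ P(γ), and suppose F^{(γ,J)} ≠ ∅. Then there is a unique element w_max ∈ F^{(γ,J)} whose inversion set R(w_max) equals the complement, within {(i,j) : 1 ≤ i < j ≤ n}, of the closure of (P(γ)∖J) ∪ Z(γ), and R(w) ⊆ R(w_max) for every w ∈ F^{(γ,J)}; that is, w_max is the unique maximal element of F^{(γ,J)} in the weak Bruhat order, where v ≤ w if and only if R(v) ⊆ R(w). -/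
namespace Stmt6

variable {n : ℕ}

/-- The inversion set `R(w) = {(i,j) : i < j, w i > w j}`. -/
def invSet (w : Equiv.Perm (Fin n)) : Set (Fin n × Fin n) :=
  {p | p.1 < p.2 ∧ w p.2 < w p.1}

/-- `Z(γ) = {(i,j) : i < j, γ i = γ j}`. -/
def Zset (γ : Fin n → ℤ) : Set (Fin n × Fin n) :=
  {p | p.1 < p.2 ∧ γ p.1 = γ p.2}

/-- `P(γ) = {(i,j) : i < j, γ j = γ i + 1}`. -/
def Pset (γ : Fin n → ℤ) : Set (Fin n × Fin n) :=
  {p | p.1 < p.2 ∧ γ p.2 = γ p.1 + 1}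

/-- `F^{(γ,J)} = {w : R(w) ∩ Z(γ) = ∅, R(w) ∩ P(γ) = J}`. -/
def Fset (γ : Fin n → ℤ) (J : Set (Fin n × Fin n)) : Set (Equiv.Perm (Fin n)) :=
  {w | invSet w ∩ Zset γ = ∅ ∧ invSet w ∩ Pset γ = J}

/-- A set of pairs is closed if `(i,j), (j,k) ∈ K` imply `(i,k) ∈ K`. -/
def IsClosedPairs (K : Set (Fin n × Fin n)) : Prop :=
  ∀ i j k : Fin n, (i, j) ∈ K → (j, k) ∈ K → (i, k) ∈ K

/-- The closure of a set of pairs: the smallest closed set containing it. -/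
def pairClosure (K : Set (Fin n × Fin n)) : Set (Fin n × Fin n) :=
  ⋂₀ {L | K ⊆ L ∧ IsClosedPairs L}

/-- All pairs `(i,j)` with `i < j`. -/
def allPairs : Set (Fin n × Fin n) := {p | p.1 < p.2}

-- basic closure lemmas
lemma subset_pairClosure (G : Set (Fin n × Fin n)) : G ⊆ pairClosure G :=
  fun p hp L hL => hL.1 hp

lemma isClosed_pairClosure (G : Set (Fin n × Fin n)) : IsClosedPairs (pairClosure G) :=
  fun i j k hij hjk L hL => hL.2 i j k (hij L hL) (hjk L hL)

lemma pairClosure_subset {G L : Set (Fin n × Fin n)} (h1 : G ⊆ L) (h2 : IsClosedPairs L) :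
    pairClosure G ⊆ L := fun p hp => hp L ⟨h1, h2⟩

lemma isClosed_allPairs : IsClosedPairs (allPairs (n := n)) := by
  intro i j k hij hjk
  have h1 : i < j := hij
  have h2 : j < k := hjk
  exact h1.trans h2

lemma mem_pairClosure_iff {G : Set (Fin n × Fin n)} {i j : Fin n} :
    (i, j) ∈ pairClosure G ↔ Relation.TransGen (fun a b => (a, b) ∈ G) i j := by
  constructor
  · intro h
    have hsub : pairClosure G ⊆ {p | Relation.TransGen (fun a b => (a, b) ∈ G) p.1 p.2} := by
      apply pairClosure_subset
      · intro p hp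
        exact Relation.TransGen.single hp
      · intro a b c hab hbc
        exact Relation.TransGen.trans hab hbc
    exact hsub h
  · intro h
    induction h with
    | single h => exact subset_pairClosure G h
    | tail _ h2 ih =>
        exact isClosed_pairClosure G _ _ _ ih (subset_pairClosure G h2)


section Gamma

variable (γ : Fin n → ℤ) (J : Set (Fin n × Fin n))

/-- The generating set. -/
def Gset : Set (Fin n × Fin n) := (Pset γ \ J) ∪ Zset γ

lemma Gset_subset_allPairs : Gset γ J ⊆ allPairs := by
  rintro ⟨i, j⟩ (⟨hP, -⟩ | hZ)
  · exact hP.1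
  · exact hZ.1

lemma lt_of_transGen {i j : Fin n}
    (h : Relation.TransGen (fun a b => (a, b) ∈ Gset γ J) i j) : i < j := by
  induction h with
  | single h => exact Gset_subset_allPairs γ J h
  | tail _ h2 ih => exact ih.trans (Gset_subset_allPairs γ J h2)

/-- splitting a generator step across a middle index -/
lemma step_split (hdom : Monotone γ) {a b j : Fin n}
    (hab : (a, b) ∈ Gset γ J) (h1 : a < j) (h2 : j < b) :
    (a, j) ∈ Gset γ J ∨ (j, b) ∈ Gset γ J := by
  have hga : γ a ≤ γ j := hdom h1.le
  have hgb : γ j ≤ γ b := hdom h2.le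
  rcases hab with ⟨hP, -⟩ | hZ
  · -- γ b = γ a + 1
    have hb : γ b = γ a + 1 := hP.2
    rcases eq_or_lt_of_le hga with he | hlt
    · exact Or.inl (Or.inr (show (a, j) ∈ Zset γ from ⟨h1, he⟩))
    · have hjb : γ j = γ b := le_antisymm hgb (by omega)
      exact Or.inr (Or.inr (show (j, b) ∈ Zset γ from ⟨h2, hjb⟩))
  · -- γ a = γ b
    have hz : γ a = γ b := hZ.2
    have haj : γ a = γ j := le_antisymm hga (by omega)
    exact Or.inl (Or.inr (show (a, j) ∈ Zset γ from ⟨h1, haj⟩))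

/-- coclosedness of the closure -/
lemma coclosed (hdom : Monotone γ) {i j k : Fin n}
    (h : (i, k) ∈ pairClosure (Gset γ J)) (h1 : i < j) (h2 : j < k) :
    (i, j) ∈ pairClosure (Gset γ J) ∨ (j, k) ∈ pairClosure (Gset γ J) := by
  rw [mem_pairClosure_iff] at h
  rw [mem_pairClosure_iff, mem_pairClosure_iff]
  induction h with
  | single h =>
      rcases step_split γ J hdom h h1 h2 with hl | hr
      · exact Or.inl (Relation.TransGen.single hl)
      · exact Or.inr (Relation.TransGen.single hr)
  | @tail b c hib hbc ih =>
      rcases lt_trichotomy j b with hjb | hjb | hjb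
      · rcases ih hjb with hl | hr
        · exact Or.inl hl
        · exact Or.inr (hr.tail hbc)
      · subst hjb; exact Or.inl hib
      · rcases step_split γ J hdom hbc hjb h2 with hl | hr
        · exact Or.inl (hib.tail hl)
        · exact Or.inr (Relation.TransGen.single hr)

end Gamma


/-- A permutation is determined by its inversion set. -/
lemma perm_eq_of_invSet_eq {w v : Equiv.Perm (Fin n)} (h : invSet w = invSet v) : w = v := by
  have key : ∀ i j : Fin n, v i < v j → w i < w j := by
    intro i j hv
    rcases lt_trichotomy i j with hij | hij | hij
    · by_contra hw
      have hne : w i ≠ w j := fun he => absurd (w.injective he) hij.ne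
      have : w j < w i := lt_of_le_of_ne (not_lt.mp hw) hne.symm
      have : (i, j) ∈ invSet w := ⟨hij, this⟩
      rw [h] at this
      exact absurd hv (not_lt.mpr this.2.le)
    · subst hij; exact absurd hv (lt_irrefl _)
    · have : (j, i) ∈ invSet v := ⟨hij, hv⟩
      rw [← h] at this
      exact this.2
  have hsm : StrictMono (fun a => w (v.symm a)) := by
    intro a b hab
    apply key
    simpa using hab
  have hid : StrictMono (id : Fin n → Fin n) := strictMono_id
  have hrange : Set.range (fun a => w (v.symm a)) = Set.range (id : Fin n → Fin n) := by
    simp [Set.range_id, Set.range_comp]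
    exact Set.eq_univ_of_forall (fun x => ⟨v (w.symm x), by simp⟩)
  have inst : WellFoundedLT (Fin n) := inferInstance
  have := (hsm.range_inj hid).mp hrange
  apply Equiv.ext
  intro i
  have h2 := congrFun this (v i)
  simpa using h2

/-- Construction of a permutation whose inversion set is the complement of a
biclosed set `K`. -/
lemma exists_perm_invSet_compl {K : Set (Fin n × Fin n)} (hall : K ⊆ allPairs)
    (hcl : IsClosedPairs K)
    (hco : ∀ i j k : Fin n, i < j → j < k → (i, k) ∈ K → (i, j) ∈ K ∨ (j, k) ∈ K) :
    ∃ w : Equiv.Perm (Fin n), invSet w = allPairs \ K := by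
  classical
  set lt' : Fin n → Fin n → Prop :=
    fun i j => (i < j ∧ (i, j) ∈ K) ∨ (j < i ∧ (j, i) ∉ K) with hlt'
  have hirr : ∀ i, ¬ lt' i i := by
    rintro i (⟨h, -⟩ | ⟨h, -⟩) <;> exact lt_irrefl _ h
  have htot : ∀ i j : Fin n, i ≠ j → lt' i j ∨ lt' j i := by
    intro i j hne
    rcases lt_trichotomy i j with hij | hij | hij
    · by_cases hK : (i, j) ∈ K
      · exact Or.inl (Or.inl ⟨hij, hK⟩)
      · exact Or.inr (Or.inr ⟨hij, hK⟩)
    · exact absurd hij hne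
    · by_cases hK : (j, i) ∈ K
      · exact Or.inr (Or.inl ⟨hij, hK⟩)
      · exact Or.inl (Or.inr ⟨hij, hK⟩)
  have htrans : ∀ i j k : Fin n, lt' i j → lt' j k → lt' i k := by
    rintro i j k (⟨hij, hijK⟩ | ⟨hji, hjiK⟩) (⟨hjk, hjkK⟩ | ⟨hkj, hkjK⟩)
    · exact Or.inl ⟨hij.trans hjk, hcl i j k hijK hjkK⟩
    · -- i < j, k < j, (i,j) ∈ K, (k,j) ∉ K
      rcases lt_trichotomy i k with hik | hik | hik
      · refine Or.inl ⟨hik, ?_⟩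
        rcases hco i k j hik hkj hijK with h | h
        · exact h
        · exact absurd h hkjK
      · subst hik; exact absurd hijK hkjK
      · refine Or.inr ⟨hik, fun hK => hkjK (hcl k i j hK hijK)⟩
    · -- j < i, j < k, (j,i) ∉ K, (j,k) ∈ K
      rcases lt_trichotomy i k with hik | hik | hik
      · refine Or.inl ⟨hik, ?_⟩
        rcases hco j i k hji hik hjkK with h | h
        · exact absurd h hjiK
        · exact h
      · subst hik; exact absurd hjkK hjiK
      · refine Or.inr ⟨hik, fun hK => hjiK (hcl j k i hjkK hK)⟩
    · -- j < i, k < j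
      refine Or.inr ⟨hkj.trans hji, fun hK => ?_⟩
      rcases hco k j i hkj hji hK with h | h
      · exact hkjK h
      · exact hjiK h
  -- rank function
  set rk : Fin n → ℕ := fun i => (Finset.univ.filter (fun k => lt' k i)).card with hrk
  have hrklt : ∀ i, rk i < n := by
    intro i
    have : (Finset.univ.filter (fun k => lt' k i)) ⊂ Finset.univ := by
      refine Finset.ssubset_iff_subset_ne.mpr ⟨Finset.subset_univ _, fun he => ?_⟩
      have : i ∈ Finset.univ.filter (fun k => lt' k i) := by
        rw [he]; exact Finset.mem_univ i
      exact hirr i (Finset.mem_filter.mp this).2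
    simpa using Finset.card_lt_card this
  set w0 : Fin n → Fin n := fun i => ⟨rk i, hrklt i⟩ with hw0
  have hmono : ∀ i j, lt' i j → w0 i < w0 j := by
    intro i j hij
    have hsub : (Finset.univ.filter (fun k => lt' k i)) ⊂
        (Finset.univ.filter (fun k => lt' k j)) := by
      refine Finset.ssubset_iff_subset_ne.mpr ⟨?_, fun he => ?_⟩
      · intro k hk
        rw [Finset.mem_filter] at hk ⊢
        exact ⟨hk.1, htrans k i j hk.2 hij⟩
      · have hi : i ∈ Finset.univ.filter (fun k => lt' k j) :=
          Finset.mem_filter.mpr ⟨Finset.mem_univ _, hij⟩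
        rw [← he, Finset.mem_filter] at hi
        exact hirr i hi.2
    exact Finset.card_lt_card hsub
  have hreflect : ∀ i j, w0 i < w0 j → lt' i j := by
    intro i j hw
    by_contra hn
    rcases eq_or_ne i j with he | hne
    · subst he; exact lt_irrefl _ hw
    · rcases htot i j hne with h | h
      · exact hn h
      · exact absurd hw (not_lt.mpr (hmono j i h).le)
  have hinj : Function.Injective w0 := by
    intro i j he
    by_contra hne
    rcases htot i j hne with h | h
    · exact absurd he (hmono i j h).ne
    · exact absurd he.symm (hmono j i h).ne
  have hbij : Function.Bijective w0 := Finite.injective_iff_bijective.mp hinj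
  refine ⟨Equiv.ofBijective w0 hbij, ?_⟩
  ext ⟨i, j⟩
  simp only [invSet, Set.mem_setOf_eq, Set.mem_diff, Equiv.ofBijective_apply]
  constructor
  · rintro ⟨hij, hw⟩
    refine ⟨hij, fun hK => ?_⟩
    rcases hreflect j i hw with ⟨h, -⟩ | ⟨-, hnK⟩
    · exact absurd hij (not_lt.mpr h.le)
    · exact hnK hK
  · rintro ⟨hij, hK⟩
    have hij' : (i : Fin n) < j := hij
    exact ⟨hij', hmono j i (Or.inr ⟨hij', fun h => hK h⟩)⟩


lemma coinv_closed (w : Equiv.Perm (Fin n)) :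
    IsClosedPairs {p : Fin n × Fin n | p.1 < p.2 ∧ w p.1 < w p.2} := by
  rintro i j k ⟨h1, h2⟩ ⟨h3, h4⟩
  exact ⟨h1.trans h3, h2.trans h4⟩

lemma Gset_subset_coinv {γ : Fin n → ℤ} {J : Set (Fin n × Fin n)}
    {w : Equiv.Perm (Fin n)} (hw : w ∈ Fset γ J) :
    Gset γ J ⊆ {p : Fin n × Fin n | p.1 < p.2 ∧ w p.1 < w p.2} := by
  rintro ⟨i, j⟩ hp
  have hij : i < j := Gset_subset_allPairs γ J hp
  refine ⟨hij, ?_⟩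
  rcases lt_or_gt_of_ne (fun he : w i = w j => absurd (w.injective he) hij.ne) with h | h
  · exact h
  · exfalso
    have hinv : (i, j) ∈ invSet w := ⟨hij, h⟩
    rcases hp with ⟨hP, hnJ⟩ | hZ
    · have : (i, j) ∈ invSet w ∩ Pset γ := ⟨hinv, hP⟩
      rw [hw.2] at this
      exact hnJ this
    · have : (i, j) ∈ invSet w ∩ Zset γ := ⟨hinv, hZ⟩
      rw [hw.1] at this
      exact this

lemma invSet_disjoint_closure {γ : Fin n → ℤ} {J : Set (Fin n × Fin n)}
    {w : Equiv.Perm (Fin n)} (hw : w ∈ Fset γ J) {p : Fin n × Fin n}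
    (h1 : p ∈ invSet w) (h2 : p ∈ pairClosure (Gset γ J)) : False := by
  have := pairClosure_subset (Gset_subset_coinv hw) (coinv_closed w) h2
  exact absurd h1.2 (not_lt.mpr this.2.le)

theorem stmt6 (γ : Fin n → ℤ) (hdom : Monotone γ)
    (J : Set (Fin n × Fin n)) (hJ : J ⊆ Pset γ)
    (hne : (Fset γ J).Nonempty) :
    ∃ wmax ∈ Fset γ J,
      invSet wmax = allPairs \ pairClosure ((Pset γ \ J) ∪ Zset γ) ∧
      (∀ w ∈ Fset γ J, invSet w ⊆ invSet wmax) ∧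
      (∀ w ∈ Fset γ J,
        invSet w = allPairs \ pairClosure ((Pset γ \ J) ∪ Zset γ) → w = wmax) := by
  classical
  obtain ⟨w0, hw0⟩ := hne
  have hGeq : (Pset γ \ J) ∪ Zset γ = Gset γ J := rfl
  rw [hGeq]
  set K := pairClosure (Gset γ J) with hKdef
  have hKall : K ⊆ allPairs :=
    pairClosure_subset (Gset_subset_allPairs γ J) isClosed_allPairs
  have hKcl : IsClosedPairs K := isClosed_pairClosure _
  have hKco : ∀ i j k : Fin n, i < j → j < k → (i, k) ∈ K → (i, j) ∈ K ∨ (j, k) ∈ K :=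
    fun i j k h1 h2 h => coclosed γ J hdom h h1 h2
  obtain ⟨wm, hwm⟩ := exists_perm_invSet_compl hKall hKcl hKco
  -- J is disjoint from K
  have hJK : ∀ p ∈ J, p ∉ K := by
    intro p hp hpK
    have hpi : p ∈ invSet w0 := by
      have : p ∈ invSet w0 ∩ Pset γ := hw0.2.symm ▸ hp
      exact this.1
    exact invSet_disjoint_closure hw0 hpi hpK
  -- wm ∈ Fset γ J
  have hwmF : wm ∈ Fset γ J := by
    constructor
    · apply Set.eq_empty_iff_forall_notMem.mpr
      rintro p ⟨h1, h2⟩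
      rw [hwm] at h1
      exact h1.2 (subset_pairClosure _ (Or.inr h2))
    · ext p
      constructor
      · rintro ⟨h1, h2⟩
        rw [hwm] at h1
        by_contra hnJ
        exact h1.2 (subset_pairClosure _ (Or.inl ⟨h2, hnJ⟩))
      · intro hp
        have hpP : p ∈ Pset γ := hJ hp
        refine ⟨?_, hpP⟩
        rw [hwm]
        exact ⟨hpP.1, hJK p hp⟩
  refine ⟨wm, hwmF, hwm, ?_, ?_⟩
  · intro w hw p hp
    rw [hwm]
    exact ⟨hp.1, fun hpK => invSet_disjoint_closure hw hp hpK⟩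
  · intro w _ hinv
    exact perm_eq_of_invSet_eq (hinv.trans hwm.symm)

end Stmt6
end

section
/- Let γ ∈ ℝⁿ be dominant and J ⊆ P(γ). Then F^{(γ,J)} is nonempty if and only if both of the following hold: (i) whenever (i,j) ∈ J and (k,j) ∈ Z(γ) with i < k, then (i,k) ∈ J; and (ii) whenever (i,j) ∈ J and (i,k) ∈ Z(γ) with k < j, then (k,j) ∈ J. (Equivalently, in root-system language: if β ∈ J, α ∈ Z(γ) and β − α is a positive root, then β − α ∈ J, where the pair (i,j) corresponds to the root ε_j − ε_i.) -/
/-!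
A permutation `w` lies in `F^{(γ,J)}` exactly when `w a < w b` for every pair with
`ForcedLt γ J a b`: equal levels and non-`J` pairs of `P(γ)` keep their order, `J` pairs are
reversed. Necessity of (i) and (ii) is a transitivity of these order relations. Conversely, as `γ`
is dominant, a constraint `a → m → b` through an index `m` larger than `a` and `b` always has a
direct shortcut `a → b` under (i) and (ii); so rational keys can be chosen greedily from left to
right, each squeezed between the keys it must exceed and those it must stay below, and sorting
the keys gives `w`.
-/

namespace Stmt7

variable {n : ℕ}

/-- The inversion set `R(w) = {(i,j) : i < j, w i > w j}`. -/
def invSet (w : Equiv.Perm (Fin n)) : Set (Fin n × Fin n) :=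
  {p | p.1 < p.2 ∧ w p.2 < w p.1}

/-- `Z(γ) = {(i,j) : i < j, γ i = γ j}`. -/
def Zset (γ : Fin n → ℝ) : Set (Fin n × Fin n) :=
  {p | p.1 < p.2 ∧ γ p.1 = γ p.2}

/-- `P(γ) = {(i,j) : i < j, γ j = γ i + 1}`. -/
def Pset (γ : Fin n → ℝ) : Set (Fin n × Fin n) :=
  {p | p.1 < p.2 ∧ γ p.2 = γ p.1 + 1}

/-- `F^{(γ,J)} = {w : R(w) ∩ Z(γ) = ∅, R(w) ∩ P(γ) = J}`. -/
def Fset (γ : Fin n → ℝ) (J : Set (Fin n × Fin n)) : Set (Equiv.Perm (Fin n)) :=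
  {w | invSet w ∩ Zset γ = ∅ ∧ invSet w ∩ Pset γ = J}

end Stmt7

section KeyFunction

variable {α β : Type*} [LinearOrder α] [LinearOrder β]

theorem exists_forall_rel_imp_lt [Fintype α] [DenselyOrdered β] [NoMinOrder β] [NoMaxOrder β]
    [Nonempty β] (r : α → α → Prop) (irrefl : ∀ a, ¬ r a a)
    (shortcut : ∀ a b m, a < m → b < m → r a m → r m b → r a b) :
    ∃ f : α → β, ∀ a b, r a b → f a < f b := by
  classical
  suffices ∀ s : Finset α, ∃ f : α → β, ∀ a ∈ s, ∀ b ∈ s, r a b → f a < f b by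
    obtain ⟨f, hf⟩ := this Finset.univ
    exact ⟨f, fun a b => hf a (Finset.mem_univ a) b (Finset.mem_univ b)⟩
  intro s
  induction s using Finset.induction_on_max with
  | empty => exact ⟨fun _ => Classical.arbitrary β, by simp⟩
  | insert m s hlt ih =>
    obtain ⟨f, hf⟩ := ih
    obtain ⟨v, hlo, hhi⟩ := Order.exists_between_finsets
      ((s.filter (r · m)).image f) ((s.filter (r m ·)).image f) (by
        simp only [Finset.mem_image, Finset.mem_filter]
        rintro _ ⟨a, ⟨ha, ham⟩, rfl⟩ _ ⟨b, ⟨hb, hmb⟩, rfl⟩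
        exact hf a ha b hb (shortcut a b m (hlt a ha) (hlt b hb) ham hmb))
    have hne : ∀ x ∈ s, x ≠ m := fun x hx => (hlt x hx).ne
    refine ⟨Function.update f m v, fun a ha b hb hab => ?_⟩
    rcases Finset.mem_insert.1 ha with rfl | ha <;> rcases Finset.mem_insert.1 hb with hbm | hb
    · exact absurd (hbm ▸ hab) (irrefl a)
    · rw [Function.update_self, Function.update_of_ne (hne b hb)]
      exact hhi _ (Finset.mem_image_of_mem f (Finset.mem_filter.2 ⟨hb, hab⟩))
    · rw [hbm, Function.update_self, Function.update_of_ne (hne a ha)]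
      exact hlo _ (Finset.mem_image_of_mem f (Finset.mem_filter.2 ⟨ha, hbm ▸ hab⟩))
    · rw [Function.update_of_ne (hne a ha), Function.update_of_ne (hne b hb)]
      exact hf a ha b hb hab

theorem exists_perm_lt_of_lt {n : ℕ} (f : Fin n → β) :
    ∃ w : Equiv.Perm (Fin n), ∀ i j, f i < f j → w i < w j :=
  ⟨(Tuple.sort f)⁻¹, fun i j hij => lt_of_not_ge fun hji =>
    hij.not_ge (by simpa using Tuple.monotone_sort f hji)⟩

theorem exists_perm_forall_rel_imp_lt {n : ℕ} (r : Fin n → Fin n → Prop) (irrefl : ∀ a, ¬ r a a)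
    (shortcut : ∀ a b m, a < m → b < m → r a m → r m b → r a b) :
    ∃ w : Equiv.Perm (Fin n), ∀ a b, r a b → w a < w b := by
  obtain ⟨f, hf⟩ := exists_forall_rel_imp_lt (β := ℚ) r irrefl shortcut
  obtain ⟨w, hw⟩ := exists_perm_lt_of_lt f
  exact ⟨w, fun a b hab => hw a b (hf a b hab)⟩

end KeyFunction

namespace Stmt7

variable {n : ℕ} {γ : Fin n → ℝ} {J : Set (Fin n × Fin n)}

theorem mem_iff_of_mem_Fset {w : Equiv.Perm (Fin n)} (hw : w ∈ Fset γ J) {p : Fin n × Fin n} :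
    p ∈ J ↔ p ∈ invSet w ∧ p ∈ Pset γ := by
  rw [← hw.2]; rfl

theorem lt_of_mem_Fset_of_mem_Zset {w : Equiv.Perm (Fin n)} (hw : w ∈ Fset γ J)
    {p : Fin n × Fin n} (hp : p ∈ Zset γ) : w p.1 < w p.2 := by
  refine lt_of_le_of_ne (le_of_not_gt fun hlt => ?_) (w.injective.ne hp.1.ne)
  exact (Set.eq_empty_iff_forall_notMem.1 hw.1) p ⟨⟨hp.1, hlt⟩, hp⟩

theorem mem_of_mem_Fset_of_mem_Zset_right {w : Equiv.Perm (Fin n)} (hw : w ∈ Fset γ J)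
    {i j k : Fin n} (hij : (i, j) ∈ J) (hkj : (k, j) ∈ Zset γ) (hik : i < k) : (i, k) ∈ J := by
  obtain ⟨⟨-, hwji⟩, -, hγ⟩ := (mem_iff_of_mem_Fset hw).1 hij
  have hwkj : w k < w j := lt_of_mem_Fset_of_mem_Zset hw hkj
  exact (mem_iff_of_mem_Fset hw).2 ⟨⟨hik, hwkj.trans hwji⟩, hik, hkj.2.trans hγ⟩

theorem mem_of_mem_Fset_of_mem_Zset_left {w : Equiv.Perm (Fin n)} (hw : w ∈ Fset γ J)
    {i j k : Fin n} (hij : (i, j) ∈ J) (hik : (i, k) ∈ Zset γ) (hkj : k < j) : (k, j) ∈ J := by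
  obtain ⟨⟨-, hwji⟩, -, hγ⟩ := (mem_iff_of_mem_Fset hw).1 hij
  have hwik : w i < w k := lt_of_mem_Fset_of_mem_Zset hw hik
  exact (mem_iff_of_mem_Fset hw).2 ⟨⟨hkj, hwji.trans hwik⟩, hkj, hik.2 ▸ hγ⟩

def ForcedLt (γ : Fin n → ℝ) (J : Set (Fin n × Fin n)) (a b : Fin n) : Prop :=
  (a < b ∧ ((a, b) ∈ Zset γ ∨ ((a, b) ∈ Pset γ ∧ (a, b) ∉ J))) ∨ (b, a) ∈ J

theorem forcedLt_irrefl (hJ : J ⊆ Pset γ) (a : Fin n) : ¬ ForcedLt γ J a a := by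
  rintro (⟨h, -⟩ | h)
  exacts [lt_irrefl a h, lt_irrefl a (hJ h).1]

theorem ForcedLt.shortcut (hdom : Monotone γ) (hJ : J ⊆ Pset γ)
    (h1 : ∀ i j k : Fin n, (i, j) ∈ J → (k, j) ∈ Zset γ → i < k → (i, k) ∈ J)
    (h2 : ∀ i j k : Fin n, (i, j) ∈ J → (i, k) ∈ Zset γ → k < j → (k, j) ∈ J)
    {a b m : Fin n} (ham : a < m) (hbm : b < m) (hr : ForcedLt γ J a m) (hr' : ForcedLt γ J m b) :
    ForcedLt γ J a b := by
  have hbmJ : (b, m) ∈ J := hr'.resolve_left fun h => (h.1.trans hbm).false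
  have hγbm : γ m = γ b + 1 := (hJ hbmJ).2
  rcases hr with ⟨-, hZ | ⟨hP, hnJ⟩⟩ | hmaJ
  · have hba : b < a := lt_of_not_ge fun hab => by linarith [hdom hab, hZ.2]
    exact Or.inr (h1 b m a hbmJ hZ hba)
  · have hγ : γ a = γ b := by linarith [hP.2]
    rcases lt_trichotomy a b with hab | rfl | hba
    · exact Or.inl ⟨hab, Or.inl ⟨hab, hγ⟩⟩
    · exact absurd hbmJ hnJ
    · exact absurd (h2 b m a hbmJ ⟨hba, hγ.symm⟩ ham) hnJ
  · exact absurd ham (hJ hmaJ).1.asymm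

theorem mem_Fset_of_forall_forcedLt (hJ : J ⊆ Pset γ) {w : Equiv.Perm (Fin n)}
    (hw : ∀ a b, ForcedLt γ J a b → w a < w b) : w ∈ Fset γ J := by
  refine ⟨Set.eq_empty_iff_forall_notMem.2 fun p ⟨⟨hp, hinv⟩, hZ⟩ => ?_, Set.ext fun p => ?_⟩
  · exact hinv.asymm (hw _ _ (Or.inl ⟨hp, Or.inl hZ⟩))
  · refine ⟨fun ⟨⟨hp, hinv⟩, hP⟩ => ?_, fun hpJ => ⟨⟨(hJ hpJ).1, hw _ _ (Or.inr hpJ)⟩, hJ hpJ⟩⟩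
    by_contra hpJ
    exact hinv.asymm (hw _ _ (Or.inl ⟨hp, Or.inr ⟨hP, hpJ⟩⟩))

theorem stmt7 (γ : Fin n → ℝ) (hdom : Monotone γ)
    (J : Set (Fin n × Fin n)) (hJ : J ⊆ Pset γ) :
    (Fset γ J).Nonempty ↔
      ((∀ i j k : Fin n, (i, j) ∈ J → (k, j) ∈ Zset γ → i < k → (i, k) ∈ J) ∧
       (∀ i j k : Fin n, (i, j) ∈ J → (i, k) ∈ Zset γ → k < j → (k, j) ∈ J)) := by
  constructor
  · rintro ⟨w, hw⟩
    exact ⟨fun i j k => mem_of_mem_Fset_of_mem_Zset_right hw,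
      fun i j k => mem_of_mem_Fset_of_mem_Zset_left hw⟩
  · rintro ⟨h1, h2⟩
    obtain ⟨w, hw⟩ := exists_perm_forall_rel_imp_lt (ForcedLt γ J) (forcedLt_irrefl hJ)
      fun a b m ham hbm => ForcedLt.shortcut hdom hJ h1 h2 ham hbm
    exact ⟨w, mem_Fset_of_forall_forcedLt hJ hw⟩

end Stmt7
end

section
/- Let γ ∈ ℝⁿ be dominant, let v be the longest element of the stabilizer W_γ = {w ∈ Sₙ : w·γ = γ}, let w₀ be the longest element of Sₙ (w₀(k) = n+1−k), let u = w₀v, and let γ* = (−γₙ, −γ_{n−1}, …, −γ₁) (which is dominant). Then: (a) u(i) < u(j) for every (i,j) ∈ Z(γ), and Z(γ*) = {(u(i), u(j)) : (i,j) ∈ Z(γ)}; (b) u(j) < u(i) for every (i,j) ∈ P(γ), and P(γ*) = {(u(j), u(i)) : (i,j) ∈ P(γ)}; (c) for every J ⊆ P(γ), the set J* = {(u(j), u(i)) : (i,j) ∈ P(γ) ∖ J} is a subset of P(γ*), and the map w ↦ w u^{−1} is a bijection from F^{(γ,J)} onto F^{(γ*, J*)}. -/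
/-!
If the longest element `v` of `W_γ` had an ascent `v i < v j` inside a block of equal entries
of `γ`, it would have one at adjacent positions `a ⋖ b` of that block, and `v * swap a b ∈ W_γ`
would be longer. So `v` reverses every block, while it preserves the order between blocks since
`γ ∘ v = γ` is monotone; hence `u = w₀ v` is increasing on blocks and decreasing across them.
Together with `γ* ∘ u = -γ` this makes `(i, j) ↦ (u i, u j)` map `Z(γ)` onto `Z(γ*)` and
`(i, j) ↦ (u j, u i)` map `P(γ)` onto `P(γ*)`. Right multiplication by `u⁻¹` carries inversions
along these maps, keeping them on `Z` and complementing them on `P`, which gives the bijection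
`F^{(γ,J)} → F^{(γ*,J*)}`.
-/

namespace Stmt8

variable {n : ℕ}

/-- The inversion set `R(w) = {(i,j) : i < j, w i > w j}`. -/
def invSet (w : Equiv.Perm (Fin n)) : Set (Fin n × Fin n) :=
  {p | p.1 < p.2 ∧ w p.2 < w p.1}

/-- The length `ℓ(w) = |R(w)|`. -/
def len (w : Equiv.Perm (Fin n)) : ℕ :=
  (Finset.univ.filter fun p : Fin n × Fin n => p.1 < p.2 ∧ w p.2 < w p.1).card

/-- `Z(γ) = {(i,j) : i < j, γ i = γ j}`. -/
def Zset (γ : Fin n → ℝ) : Set (Fin n × Fin n) :=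
  {p | p.1 < p.2 ∧ γ p.1 = γ p.2}

/-- `P(γ) = {(i,j) : i < j, γ j = γ i + 1}`. -/
def Pset (γ : Fin n → ℝ) : Set (Fin n × Fin n) :=
  {p | p.1 < p.2 ∧ γ p.2 = γ p.1 + 1}

/-- `F^{(γ,J)} = {w : R(w) ∩ Z(γ) = ∅, R(w) ∩ P(γ) = J}`. -/
def Fset (γ : Fin n → ℝ) (J : Set (Fin n × Fin n)) : Set (Equiv.Perm (Fin n)) :=
  {w | invSet w ∩ Zset γ = ∅ ∧ invSet w ∩ Pset γ = J}

/-- The stabilizer `W_γ = {w : w·γ = γ}`, where `(w·γ)_k = γ (w⁻¹ k)`. -/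
def stab (γ : Fin n → ℝ) : Set (Equiv.Perm (Fin n)) :=
  {w | ∀ k, γ (w⁻¹ k) = γ k}

open Equiv

theorem _root_.CovBy.swap_apply_lt_swap_apply {α : Type*} [LinearOrder α] {a b x y : α}
    (hab : a ⋖ b) (hxy : x < y) (hne : (x, y) ≠ (a, b)) : swap a b x < swap a b y := by
  have h₁ : x < b → x ≤ a := hab.le_of_lt
  have h₂ : a < y → b ≤ y := hab.ge_of_gt
  have hlt : a < b := hab.lt
  simp only [swap_apply_def]
  split_ifs <;> subst_vars <;> simp_all <;> order

theorem _root_.exists_covBy_apply_lt_apply {α β : Type*} [LinearOrder α] [SuccOrder α]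
    [IsSuccArchimedean α] [LinearOrder β] {f : α → β} {i j : α} (hij : i ≤ j) (h : f i < f j) :
    ∃ a b, i ≤ a ∧ a ⋖ b ∧ b ≤ j ∧ f a < f b := by
  by_contra! hf
  refine (antitoneOn_of_succ_le Set.ordConnected_Icc ?_ ⟨le_rfl, hij⟩ ⟨hij, le_rfl⟩ hij).not_gt h
  exact fun c hc hci hsc => hf c _ hci.1 (Order.covBy_succ_of_not_isMax hc) hsc.2

theorem _root_.Set.eq_image_of_forall_mem_iff {α β : Type*} {f : α → β}
    (hf : Function.Surjective f) {s : Set α} {t : Set β} (h : ∀ x, f x ∈ t ↔ x ∈ s) :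
    t = f '' s :=
  (Set.image_preimage_eq t hf).symm.trans (congrArg _ (Set.ext h))

theorem _root_.Set.inter_eq_iff_diff_eq_diff {α : Type*} {A P J : Set α} (hJ : J ⊆ P) :
    A ∩ P = J ↔ P \ A = P \ J := by
  rw [sdiff_eq_sdiff_iff_inf_eq_inf]
  change _ ↔ P ∩ A = P ∩ J
  rw [Set.inter_eq_right.2 hJ, Set.inter_comm]

theorem len_lt_len_mul_swap {v : Perm (Fin n)} {a b : Fin n} (hab : a ⋖ b) (hv : v a < v b) :
    len v < len (v * swap a b) := by
  set s := swap a b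
  -- `s × s` maps the inversions of `v` to inversions of `v * s` other than `(a, b)`.
  let e := (s.prodCongr s).toEmbedding
  rw [len, len, ← Finset.card_map e]
  refine Finset.card_lt_card ((Finset.ssubset_iff_of_subset ?_).2 ⟨(a, b), ?_, ?_⟩)
  · simp only [Finset.subset_iff, Finset.mem_map, Finset.mem_filter, Finset.mem_univ, true_and]
    rintro _ ⟨p, ⟨hp, hvp⟩, rfl⟩
    have hne : p ≠ (a, b) := by rintro rfl; exact hv.not_gt hvp
    refine ⟨hab.swap_apply_lt_swap_apply hp hne, ?_⟩
    simpa [e, s] using hvp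
  · exact Finset.mem_filter.2 ⟨Finset.mem_univ _, hab.lt, by simpa [s] using hv⟩
  · simp only [Finset.mem_map, Finset.mem_filter, not_exists, not_and]
    rintro ⟨x, y⟩ ⟨-, hxy, -⟩ h
    simp only [e, s, Equiv.coe_toEmbedding, prodCongr_apply, Prod.map, Prod.mk.injEq,
      swap_apply_eq_iff, swap_apply_left, swap_apply_right] at h
    obtain ⟨rfl, rfl⟩ := h
    exact hab.lt.not_gt hxy

theorem apply_eq_of_mem_stab {γ : Fin n → ℝ} {v : Perm (Fin n)} (hv : v ∈ stab γ) (k : Fin n) :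
    γ (v k) = γ k := by
  simpa using (hv (v k)).symm

theorem mul_swap_mem_stab {γ : Fin n → ℝ} {v : Perm (Fin n)} (hv : v ∈ stab γ) {a b : Fin n}
    (hab : γ a = γ b) : v * swap a b ∈ stab γ := by
  intro k
  rw [mul_inv_rev, swap_inv, Perm.mul_apply, ← hv k]
  simp only [swap_apply_def]
  split_ifs <;> simp_all

theorem apply_lt_apply_of_mem_stab {γ : Fin n → ℝ} (hγ : Monotone γ) {v : Perm (Fin n)}
    (hv : v ∈ stab γ) {a b : Fin n} (h : γ a < γ b) : v a < v b :=
  hγ.reflect_lt (by rwa [apply_eq_of_mem_stab hv, apply_eq_of_mem_stab hv])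

theorem apply_lt_apply_of_eq_of_longest {γ : Fin n → ℝ} (hγ : Monotone γ) {v : Perm (Fin n)}
    (hv : v ∈ stab γ) (hvmax : ∀ x ∈ stab γ, len x ≤ len v) {i j : Fin n} (hij : i < j)
    (h : γ i = γ j) : v j < v i := by
  by_contra! hle
  obtain ⟨a, b, hia, hab, hbj, hvab⟩ :=
    exists_covBy_apply_lt_apply hij.le (hle.lt_of_ne (v.injective.ne hij.ne))
  have hγab : γ a = γ b :=
    le_antisymm (hγ hab.le) (((hγ hbj).trans_eq h.symm).trans (hγ hia))
  exact (hvmax _ (mul_swap_mem_stab hv hγab)).not_gt (len_lt_len_mul_swap hab hvab)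

section Opposite

variable {γ γs : Fin n → ℝ} {u : Perm (Fin n)}

theorem prodMk_mem_Zset_iff (hγs : ∀ k, γs (u k) = -γ k)
    (hu : ∀ a b, a < b → γ a = γ b → u a < u b) (a b : Fin n) :
    (u a, u b) ∈ Zset γs ↔ (a, b) ∈ Zset γ := by
  simp only [Zset, Set.mem_ofPred_eq, hγs, neg_inj]
  refine ⟨fun ⟨hlt, heq⟩ => ⟨lt_of_not_ge fun hba => ?_, heq⟩,
    fun ⟨hlt, heq⟩ => ⟨hu a b hlt heq, heq⟩⟩
  obtain rfl | hba := hba.eq_or_lt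
  · exact hlt.false
  · exact (hu b a hba heq.symm).not_gt hlt

theorem prodMk_mem_Pset_iff (hγ : Monotone γ) (hγs : ∀ k, γs (u k) = -γ k)
    (hu : ∀ a b, γ a < γ b → u b < u a) (a b : Fin n) :
    (u b, u a) ∈ Pset γs ↔ (a, b) ∈ Pset γ := by
  simp only [Pset, Set.mem_ofPred_eq, hγs]
  rw [show -γ a = -γ b + 1 ↔ γ b = γ a + 1 by constructor <;> intro <;> linarith]
  exact ⟨fun ⟨_, heq⟩ => ⟨hγ.reflect_lt (by linarith), heq⟩,
    fun ⟨_, heq⟩ => ⟨hu a b (by linarith), heq⟩⟩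

end Opposite

theorem prodMk_mem_invSet_mul_inv (w u : Perm (Fin n)) (a b : Fin n) :
    (u a, u b) ∈ invSet (w * u⁻¹) ↔ u a < u b ∧ w b < w a := by
  simp [invSet]

section InvSet

variable {w u : Perm (Fin n)} {S : Set (Fin n × Fin n)}

theorem invSet_mul_inv_inter_image (hS : ∀ p ∈ S, p.1 < p.2 ∧ u p.1 < u p.2) :
    invSet (w * u⁻¹) ∩ (fun p => (u p.1, u p.2)) '' S =
      (fun p => (u p.1, u p.2)) '' (invSet w ∩ S) := by
  rw [Set.inter_comm, ← Set.image_inter_preimage]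
  congr 1
  ext p
  simp only [Set.mem_inter_iff, Set.mem_preimage, prodMk_mem_invSet_mul_inv]
  exact ⟨fun ⟨hp, _, hw⟩ => ⟨⟨(hS p hp).1, hw⟩, hp⟩, fun ⟨⟨_, hw⟩, hp⟩ => ⟨hp, (hS p hp).2, hw⟩⟩

theorem invSet_mul_inv_inter_image_swap (hS : ∀ p ∈ S, p.1 < p.2 ∧ u p.2 < u p.1) :
    invSet (w * u⁻¹) ∩ (fun p => (u p.2, u p.1)) '' S =
      (fun p => (u p.2, u p.1)) '' (S \ invSet w) := by
  rw [Set.inter_comm, ← Set.image_inter_preimage]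
  congr 1
  ext p
  simp only [Set.mem_inter_iff, Set.mem_sdiff, Set.mem_preimage, prodMk_mem_invSet_mul_inv]
  refine ⟨fun ⟨hp, _, hw⟩ => ⟨hp, fun h => h.2.asymm hw⟩, fun ⟨hp, hn⟩ => ⟨hp, (hS p hp).2, ?_⟩⟩
  exact lt_of_not_ge fun h => hn ⟨(hS p hp).1, h.lt_of_ne (w.injective.ne (hS p hp).1.ne')⟩

end InvSet

theorem mul_inv_mem_Fset_iff {γ γs : Fin n → ℝ} {u : Perm (Fin n)}
    (hZ : Zset γs = (fun p => (u p.1, u p.2)) '' Zset γ)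
    (hP : Pset γs = (fun p => (u p.2, u p.1)) '' Pset γ)
    (hu_eq : ∀ p ∈ Zset γ, u p.1 < u p.2) (hPu : ∀ p ∈ Pset γ, u p.2 < u p.1)
    {J : Set (Fin n × Fin n)} (hJ : J ⊆ Pset γ) (w : Perm (Fin n)) :
    w * u⁻¹ ∈ Fset γs ((fun p => (u p.2, u p.1)) '' (Pset γ \ J)) ↔ w ∈ Fset γ J := by
  have hΦ : Function.Injective fun p : Fin n × Fin n => (u p.2, u p.1) :=
    (u.prodCongr u).injective.comp Prod.swap_injective
  simp only [Fset, Set.mem_ofPred_eq]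
  rw [hZ, hP, invSet_mul_inv_inter_image fun p hp => ⟨hp.1, hu_eq p hp⟩,
    invSet_mul_inv_inter_image_swap fun p hp => ⟨hp.1, hPu p hp⟩, Set.image_eq_empty,
    (Set.image_injective.2 hΦ).eq_iff, Set.inter_eq_iff_diff_eq_diff hJ]

theorem stmt8 (γ : Fin n → ℝ) (hdom : Monotone γ)
    (v : Equiv.Perm (Fin n)) (hv : v ∈ stab γ)
    (hvmax : ∀ x ∈ stab γ, len x ≤ len v)
    (u : Equiv.Perm (Fin n)) (hu : u = Fin.revPerm * v)
    (γs : Fin n → ℝ) (hγs : ∀ k, γs k = - γ k.rev) :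
    ((∀ p ∈ Zset γ, u p.1 < u p.2) ∧
      Zset γs = (fun p : Fin n × Fin n => (u p.1, u p.2)) '' Zset γ) ∧
    ((∀ p ∈ Pset γ, u p.2 < u p.1) ∧
      Pset γs = (fun p : Fin n × Fin n => (u p.2, u p.1)) '' Pset γ) ∧
    (∀ J ⊆ Pset γ,
      (fun p : Fin n × Fin n => (u p.2, u p.1)) '' (Pset γ \ J) ⊆ Pset γs ∧
      Set.BijOn (fun w => w * u⁻¹) (Fset γ J)
        (Fset γs ((fun p : Fin n × Fin n => (u p.2, u p.1)) '' (Pset γ \ J)))) := by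
  have hu_apply : ∀ k, u k = (v k).rev := fun k => by rw [hu]; rfl
  have hγsu : ∀ k, γs (u k) = -γ k := fun k => by
    rw [hγs, hu_apply, Fin.rev_rev, apply_eq_of_mem_stab hv]
  have hu_eq : ∀ a b, a < b → γ a = γ b → u a < u b := fun a b hab h => by
    simpa only [hu_apply, Fin.rev_lt_rev] using apply_lt_apply_of_eq_of_longest hdom hv hvmax hab h
  have hu_lt : ∀ a b, γ a < γ b → u b < u a := fun a b h => by
    simpa only [hu_apply, Fin.rev_lt_rev] using apply_lt_apply_of_mem_stab hdom hv h
  have hZ : Zset γs = (fun p : Fin n × Fin n => (u p.1, u p.2)) '' Zset γ :=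
    Set.eq_image_of_forall_mem_iff (u.prodCongr u).surjective
      fun p => prodMk_mem_Zset_iff hγsu hu_eq p.1 p.2
  have hP : Pset γs = (fun p : Fin n × Fin n => (u p.2, u p.1)) '' Pset γ :=
    Set.eq_image_of_forall_mem_iff ((u.prodCongr u).surjective.comp Prod.swap_surjective)
      fun p => prodMk_mem_Pset_iff hdom hγsu hu_lt p.1 p.2
  have hZ_lt : ∀ p ∈ Zset γ, u p.1 < u p.2 := fun p hp => hu_eq _ _ hp.1 hp.2
  have hP_lt : ∀ p ∈ Pset γ, u p.2 < u p.1 := fun p hp => hu_lt _ _ (by linarith [hp.2])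
  exact ⟨⟨hZ_lt, hZ⟩, ⟨hP_lt, hP⟩, fun J hJ => ⟨hP ▸ Set.image_mono Set.sdiff_subset,
    (Equiv.mulRight u⁻¹).bijOn fun w => mul_inv_mem_Fset_iff hZ hP hZ_lt hP_lt hJ w⟩⟩

end Stmt8
end

section
/- Let γ ∈ ℝⁿ be dominant, J ⊆ P(γ), and w, w′ ∈ F^{(γ,J)}. Then there exist indices i₁,…,i_m ∈ {1,…,n−1} such that w′ = s_{i_m}⋯s_{i_1} w and, for every 1 ≤ k ≤ m, the partial product s_{i_k}⋯s_{i_1} w lies in F^{(γ,J)} (here sᵢ denotes the transposition (i, i+1)); that is, any two elements of F^{(γ,J)} are connected by a chain of left multiplications by simple transpositions staying inside F^{(γ,J)}. -/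
/-!
Whether `w` lies in `F^{(γ,J)}` depends only on `R(w) ∩ (Z(γ) ∪ P(γ))`, so for `w, w'` in it the
symmetric difference `R(w) ∆ R(w')` avoids `Z(γ) ∪ P(γ)`. If `w ≠ w'`, then `w' w⁻¹` has a descent
at some adjacent pair `x ⋖ y`; left multiplication by `s = (x y)` toggles exactly one pair of `R(w)`,
and that pair lies in `R(w) ∆ R(w')`. Hence `s w` stays in `F^{(γ,J)}` and is strictly closer to
`w'`, and we conclude by induction on `|R(w) ∆ R(w')|`.
-/

namespace Stmt14

variable {n : ℕ}

/-- The inversion set `R(w) = {(i,j) : i < j, w i > w j}`. -/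
def invSet (w : Equiv.Perm (Fin n)) : Set (Fin n × Fin n) :=
  {p | p.1 < p.2 ∧ w p.2 < w p.1}

/-- `Z(γ) = {(i,j) : i < j, γ i = γ j}`. -/
def Zset (γ : Fin n → ℝ) : Set (Fin n × Fin n) :=
  {p | p.1 < p.2 ∧ γ p.1 = γ p.2}

/-- `P(γ) = {(i,j) : i < j, γ j = γ i + 1}`. -/
def Pset (γ : Fin n → ℝ) : Set (Fin n × Fin n) :=
  {p | p.1 < p.2 ∧ γ p.2 = γ p.1 + 1}

/-- `F^{(γ,J)} = {w : R(w) ∩ Z(γ) = ∅, R(w) ∩ P(γ) = J}`. -/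
def Fset (γ : Fin n → ℝ) (J : Set (Fin n × Fin n)) : Set (Equiv.Perm (Fin n)) :=
  {w | invSet w ∩ Zset γ = ∅ ∧ invSet w ∩ Pset γ = J}

end Stmt14

open Equiv Relation
open scoped symmDiff

theorem exists_list_prod_mul_of_reflTransGen {M : Type*} [Monoid M] {S F : Set M} {a b : M}
    (ha : a ∈ F) (h : ReflTransGen (fun u v => v ∈ F ∧ ∃ s ∈ S, v = s * u) a b) :
    ∃ l : List M, (∀ s ∈ l, s ∈ S) ∧ l.prod * a = b ∧ ∀ k, (l.drop k).prod * a ∈ F := by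
  induction h with
  | refl => exact ⟨[], by simp, by simp, fun k => by simpa using ha⟩
  | tail _ hstep ih =>
    obtain ⟨l, hlS, hprod, hdrop⟩ := ih
    obtain ⟨hv, s, hs, rfl⟩ := hstep
    refine ⟨s :: l, ?_, by rw [List.prod_cons, mul_assoc, hprod], ?_⟩
    · simpa using ⟨hs, hlS⟩
    · rintro (_ | k)
      · simpa [mul_assoc, hprod] using hv
      · exact hdrop k

theorem Equiv.swap_apply_lt_swap_apply_iff {α : Type*} [LinearOrder α] {x y u v : α}
    (hxy : x ⋖ y) (h₁ : ¬(u = x ∧ v = y)) (h₂ : ¬(u = y ∧ v = x)) :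
    swap x y u < swap x y v ↔ u < v := by
  have hlt {z : α} (hz : z ≠ x) : z < y ↔ z < x := by
    rw [hxy.lt_iff_le_left, le_iff_lt_or_eq, or_iff_left hz]
  have hgt {z : α} (hz : z ≠ y) : x < z ↔ y < z := by
    rw [← hxy.le_iff_lt_right, le_iff_lt_or_eq, or_iff_left hz.symm]
  by_cases hux : u = x <;> by_cases huy : u = y <;> by_cases hvx : v = x <;>
    by_cases hvy : v = y <;> simp_all [swap_apply_of_ne_of_ne, hxy.ne, hxy.ne.symm]

theorem Equiv.Perm.exists_covBy_apply_lt_of_ne_one {α : Type*} [LinearOrder α]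
    [LocallyFiniteOrder α] [WellFoundedLT α] {u : Perm α} (hu : u ≠ 1) :
    ∃ x y, x ⋖ y ∧ u y < u x := by
  by_contra! h
  have hmono : StrictMono u := (strictMono_iff_forall_covBy u).2 fun x y hxy =>
    (h x y hxy).lt_of_ne (u.injective.ne hxy.ne)
  refine hu (Equiv.ext fun x => ?_)
  exact DFunLike.congr_fun (Subsingleton.elim (hmono.orderIsoOfSurjective u u.surjective)
    (OrderIso.refl α)) x

namespace Stmt14

variable {n : ℕ}

theorem min_max_mem_invSet_iff (w : Perm (Fin n)) {i j : Fin n} (hij : i ≠ j) :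
    (min i j, max i j) ∈ invSet w ↔ (i < j ↔ w j < w i) := by
  rcases hij.lt_or_gt with h | h
  · simp [invSet, h, min_eq_left h.le, max_eq_right h.le]
  · simp [invSet, h, h.not_gt, le_iff_lt_or_eq, h.ne']

theorem invSet_swap_mul {x y : Fin n} (hxy : x ⋖ y) (w : Perm (Fin n)) :
    invSet (swap x y * w) = invSet w ∆ {(min (w⁻¹ x) (w⁻¹ y), max (w⁻¹ x) (w⁻¹ y))} := by
  obtain ⟨a, rfl⟩ := w.surjective x
  obtain ⟨b, rfl⟩ := w.surjective y
  have hab : a ≠ b := fun h => hxy.ne (congrArg w h)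
  simp only [Perm.inv_def, symm_apply_apply]
  ext q
  by_cases hq : q = (min a b, max a b)
  · subst hq
    simp [Set.mem_symmDiff, min_max_mem_invSet_iff _ hab, hxy.lt, hxy.lt.not_gt]
  · simp only [Set.mem_symmDiff, Set.mem_singleton_iff, hq, not_false_eq_true, and_true,
      false_and, or_false, invSet, Set.mem_ofPred_eq, Perm.mul_apply]
    refine and_congr_right fun hlt => swap_apply_lt_swap_apply_iff hxy ?_ ?_ <;>
      rintro ⟨h₁, h₂⟩ <;> rw [w.injective.eq_iff] at h₁ h₂ <;> subst h₁ h₂ <;> apply hq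
    · simp [min_eq_right hlt.le, max_eq_left hlt.le]
    · simp [min_eq_left hlt.le, max_eq_right hlt.le]

theorem mem_Fset_iff {γ : Fin n → ℝ} {J : Set (Fin n × Fin n)} {v w : Perm (Fin n)}
    (hw : w ∈ Fset γ J) :
    v ∈ Fset γ J ↔ invSet v ∆ invSet w ∩ Zset γ = ∅ ∧ invSet v ∆ invSet w ∩ Pset γ = ∅ := by
  rw [Set.inter_symmDiff_distrib_right, Set.inter_symmDiff_distrib_right, hw.1, hw.2,
    ← Set.bot_eq_empty, symmDiff_eq_bot, symmDiff_eq_bot]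
  rfl

theorem exists_covBy_invSet_swap_mul_eq {w w' : Perm (Fin n)} (hne : w ≠ w') :
    ∃ x y : Fin n, x ⋖ y ∧
      ∃ p ∈ invSet w ∆ invSet w', invSet (swap x y * w) = invSet w ∆ {p} := by
  obtain ⟨x, y, hxy, hlt⟩ :=
    (w' * w⁻¹).exists_covBy_apply_lt_of_ne_one (mul_inv_eq_one.not.2 hne.symm)
  refine ⟨x, y, hxy, _, ?_, invSet_swap_mul hxy w⟩
  obtain ⟨a, rfl⟩ := w.surjective x
  obtain ⟨b, rfl⟩ := w.surjective y
  have hab : a ≠ b := fun h => hxy.ne (congrArg w h)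
  simp only [Perm.mul_apply, Perm.inv_def, symm_apply_apply] at hlt ⊢
  rw [Set.mem_symmDiff, min_max_mem_invSet_iff _ hab, min_max_mem_invSet_iff _ hab]
  simp only [hlt, hxy.lt.not_gt, iff_false, iff_true]
  tauto

def adjacentSwaps (n : ℕ) : Set (Perm (Fin n)) :=
  {s | ∃ (i : ℕ) (h : i + 1 < n), s = swap (⟨i, Nat.lt_of_succ_lt h⟩ : Fin n) ⟨i + 1, h⟩}

theorem swap_mem_adjacentSwaps {x y : Fin n} (hxy : x ⋖ y) : swap x y ∈ adjacentSwaps n := by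
  have hy : (x : ℕ) + 1 = y := Nat.covBy_iff_add_one_eq.1 (Fin.covBy_iff.1 hxy)
  refine ⟨x, hy ▸ y.isLt, ?_⟩
  congr
  exact Fin.ext hy.symm

theorem reflTransGen_of_mem_Fset {γ : Fin n → ℝ} {J : Set (Fin n × Fin n)}
    {w w' : Perm (Fin n)} (hw : w ∈ Fset γ J) (hw' : w' ∈ Fset γ J) :
    ReflTransGen (fun u v => v ∈ Fset γ J ∧ ∃ s ∈ adjacentSwaps n, v = s * u) w w' := by
  obtain rfl | hne := eq_or_ne w w'
  · exact .refl
  obtain ⟨x, y, hxy, p, hp, hinv⟩ := exists_covBy_invSet_swap_mul_eq hne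
  have hdiff := (mem_Fset_iff hw').1 hw
  have hv : swap x y * w ∈ Fset γ J := by
    rw [mem_Fset_iff hw, hinv, symmDiff_symmDiff_self']
    have hsub := Set.singleton_subset_iff.2 hp
    exact ⟨Set.subset_eq_empty (Set.inter_subset_inter_left _ hsub) hdiff.1,
      Set.subset_eq_empty (Set.inter_subset_inter_left _ hsub) hdiff.2⟩
  have hdec : (invSet (swap x y * w) ∆ invSet w').ncard < (invSet w ∆ invSet w').ncard := by
    rw [hinv, symmDiff_right_comm, symmDiff_comm,
      symmDiff_of_le (Set.singleton_subset_iff.2 hp)]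
    exact Set.ncard_sdiff_singleton_lt_of_mem hp
  exact .head ⟨hv, swap x y, swap_mem_adjacentSwaps hxy, rfl⟩ (reflTransGen_of_mem_Fset hv hw')
termination_by (invSet w ∆ invSet w').ncard

/-- The list `l` is `[s_{i_m}, …, s_{i_1}]`, so that the partial products `s_{i_k}⋯s_{i_1} w`
are the products of its suffixes with `w`. -/
theorem stmt14 (γ : Fin n → ℝ)
    (J : Set (Fin n × Fin n))
    (w w' : Equiv.Perm (Fin n)) (hw : w ∈ Fset γ J) (hw' : w' ∈ Fset γ J) :
    ∃ l : List (Equiv.Perm (Fin n)),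
      (∀ s ∈ l, ∃ (i : ℕ) (h : i + 1 < n),
          s = Equiv.swap (⟨i, by omega⟩ : Fin n) ⟨i + 1, h⟩) ∧
      l.prod * w = w' ∧
      (∀ k : ℕ, (l.drop k).prod * w ∈ Fset γ J) :=
  exists_list_prod_mul_of_reflTransGen hw (reflTransGen_of_mem_Fset hw hw')

end Stmt14
end

section
/- Let n ≥ 2 and let f : Sₙ → A be any function. Then the determinant of the Sₙ × Sₙ matrix whose (z,y) entry is z·f(y) is divisible in A by ∏_{1 ≤ i < j ≤ n} (xⱼ − xᵢ)^{n!/2}. -/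
namespace Stmt15

open scoped BigOperators

/-- The Laurent polynomial ring `A = ℤ[x₁^{±1},…,xₙ^{±1}]`, as the group algebra of `ℤⁿ`. -/
abbrev A (n : ℕ) : Type := AddMonoidAlgebra ℤ (Fin n →₀ ℤ)

/-- The action of `w ∈ Sₙ` on `A` permuting the variables (`xᵢ ↦ x_{w i}`). -/
noncomputable def permAct (n : ℕ) (w : Equiv.Perm (Fin n)) : A n ≃ₐ[ℤ] A n :=
  AddMonoidAlgebra.domCongr ℤ ℤ (Finsupp.domCongr w)

/-- The variable `xᵢ`. -/
noncomputable def xvar {n : ℕ} (i : Fin n) : A n :=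
  AddMonoidAlgebra.single (Finsupp.single i 1) 1

end Stmt15

/-!
Fix `i < j`, let `τ = (i j)` and `p = x_j - x_i`. Every `a ∈ A` satisfies `τ • a ≡ a (mod p)`, so the
rows `z` and `τ z` of the matrix agree modulo `p`; subtracting from the row of each even `z` the row
of the odd `τ z` leaves `n!/2` rows divisible by `p`, hence `p ^ (n!/2) ∣ det`.
To combine the pairs: `p` is associated to `x^(e_i - e_j) - 1`, which generates the kernel of the
substitution `x_j ↦ x_i` (on exponents, `projAlong`) of `A` into the domain `A`, so `p` is prime;
and the same substitution shows that these primes are pairwise non-associated.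
-/

namespace AddMonoidAlgebra

variable {k G : Type*} [CommRing k] [AddCommGroup G]

theorem single_sub_one_dvd_single_zsmul_sub_one (g : G) (c : ℤ) :
    (single g 1 - 1 : AddMonoidAlgebra k G) ∣ single (c • g) 1 - 1 := by
  have hnat (m : ℕ) : (single g 1 - 1 : AddMonoidAlgebra k G) ∣ single (m • g) 1 - 1 := by
    simpa only [single_pow, one_pow] using sub_one_dvd_pow_sub_one (single g (1 : k)) m
  obtain ⟨m, rfl | rfl⟩ := Int.eq_nat_or_neg c
  · simpa only [natCast_zsmul] using hnat m
  · have h : (single ((-m : ℤ) • g) 1 - 1 : AddMonoidAlgebra k G) =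
        -single (-(m • g)) 1 * (single (m • g) 1 - 1) := by
      rw [neg_mul, mul_sub, single_mul_single, neg_add_cancel, mul_one, mul_one, ← one_def,
        neg_sub, neg_zsmul, natCast_zsmul]
    rw [h]
    exact (hnat m).mul_left _

theorem single_sub_one_dvd_single_sub_single {g m m' : G}
    (h : m' - m ∈ AddSubgroup.zmultiples g) (d : k) :
    (single g 1 - 1 : AddMonoidAlgebra k G) ∣ single m' d - single m d := by
  obtain ⟨c, hc⟩ := h
  have : single m' d - single m d = single m d * (single (c • g) 1 - 1 : AddMonoidAlgebra k G) := by
    rw [mul_sub, single_mul_single, show c • g = m' - m from hc, add_sub_cancel, mul_one, mul_one]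
  rw [this]
  exact (single_sub_one_dvd_single_zsmul_sub_one g c).mul_left _

theorem single_sub_one_dvd_mapDomain_sub {g : G} {φ : G → G}
    (hφ : ∀ m, φ m - m ∈ AddSubgroup.zmultiples g) (a : AddMonoidAlgebra k G) :
    (single g 1 - 1 : AddMonoidAlgebra k G) ∣ mapDomain φ a - a := by
  induction a using induction_linear with
  | zero => simp [mapDomain_zero]
  | add a b ha hb =>
    rw [mapDomain_add, add_sub_add_comm]
    exact dvd_add ha hb
  | single m d =>
    rw [mapDomain_single]
    exact single_sub_one_dvd_single_sub_single (hφ m) d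

def projAlong (l : G →+ ℤ) (g : G) : G →+ G :=
  AddMonoidHom.id G - (zmultiplesHom G g).comp l

theorem projAlong_apply (l : G →+ ℤ) (g m : G) : projAlong l g m = m - l m • g := rfl

variable {l : G →+ ℤ} {g : G}

theorem ker_mapDomainRingHom_projAlong (hl : l g = 1) :
    RingHom.ker (mapDomainRingHom k (projAlong l g)) = Ideal.span {single g 1 - 1} := by
  apply le_antisymm
  · intro a ha
    rw [Ideal.mem_span_singleton]
    have h := single_sub_one_dvd_mapDomain_sub (k := k) (g := g) (φ := projAlong l g)
      (fun m => ⟨-l m, by simp [projAlong_apply]⟩) a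
    rwa [show mapDomain (projAlong l g) a = 0 from ha, zero_sub, dvd_neg] at h
  · rw [Ideal.span_le, Set.singleton_subset_iff, SetLike.mem_coe, RingHom.mem_ker, map_sub, map_one]
    simp [mapDomainRingHom, mapDomain_single, projAlong_apply, hl, one_def]

variable [Nontrivial k]

theorem mem_zmultiples_of_single_sub_one_dvd (hl : l g = 1) {g' : G}
    (h : (single g 1 - 1 : AddMonoidAlgebra k G) ∣ single g' 1 - 1) :
    g' ∈ AddSubgroup.zmultiples g := by
  rw [← Ideal.mem_span_singleton, ← ker_mapDomainRingHom_projAlong hl, RingHom.mem_ker,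
    map_sub, map_one, sub_eq_zero, one_def] at h
  simp only [mapDomainRingHom, RingHom.coe_mk, MonoidHom.coe_mk, OneHom.coe_mk, mapDomain_single,
    single_left_inj one_ne_zero, projAlong_apply, sub_eq_zero] at h
  exact ⟨l g', h.symm⟩

theorem prime_single_sub_one [IsDomain (AddMonoidAlgebra k G)] (hl : l g = 1) :
    Prime (single g 1 - 1 : AddMonoidAlgebra k G) := by
  have hg : g ≠ 0 := by rintro rfl; simp at hl
  have hne : (single g 1 - 1 : AddMonoidAlgebra k G) ≠ 0 := by
    rw [sub_ne_zero, one_def, Ne, single_left_inj one_ne_zero]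
    exact hg
  rw [← Ideal.span_singleton_prime hne, ← ker_mapDomainRingHom_projAlong hl]
  exact RingHom.ker_isPrime _

end AddMonoidAlgebra

theorem Matrix.pow_card_dvd_det_of_dvd_sub_row {ι R : Type*} [DecidableEq ι] [Fintype ι]
    [CommRing R] {p : R} {σ : ι → ι} {s : Finset ι} (hσ : ∀ z ∈ s, σ z ∉ s)
    (M : Matrix ι ι R) (hM : ∀ z ∈ s, ∀ y, p ∣ M z y - M (σ z) y) : p ^ s.card ∣ M.det := by
  induction s using Finset.induction_on generalizing M with
  | empty => simp
  | insert a s ha ih =>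
    rw [Finset.forall_mem_insert] at hσ hM
    have hσa : σ a ≠ a := fun h => hσ.1 (by simp [h])
    choose w hw using hM.1
    -- row `a` of `M` is `p • w` plus row `σ a`, and adding another row does not change `det`
    have hdet : M.det = p * (M.updateRow a w).det := by
      calc M.det = ((M.updateRow a (p • w)).updateRow a
              (M.updateRow a (p • w) a + M.updateRow a (p • w) (σ a))).det := by
            congr 1
            ext z y
            rcases eq_or_ne z a with rfl | hz
            · simp [Matrix.updateRow_ne hσa, ← hw y]
            · simp [hz]
        _ = p * (M.updateRow a w).det := by
            rw [Matrix.det_updateRow_add_self _ hσa.symm, Matrix.det_updateRow_smul]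
    rw [hdet, Finset.card_insert_of_notMem ha, pow_succ']
    refine mul_dvd_mul_left p (ih (fun z hz h => hσ.2 z hz (Finset.mem_insert_of_mem h)) _
      fun z hz y => ?_)
    have hza : z ≠ a := fun h => ha (h ▸ hz)
    have hσz : σ z ≠ a := fun h => hσ.2 z hz (by simp [h])
    simpa [Matrix.updateRow_ne hza, Matrix.updateRow_ne hσz] using hM.2 z hz y

theorem Finset.prod_pow_dvd_of_prime {α ι : Type*} [CommMonoidWithZero α] [IsCancelMulZero α]
    [DecidableEq ι] {s : Finset ι} {q : ι → α} (hq : ∀ t ∈ s, Prime (q t))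
    (hdvd : ∀ t ∈ s, ∀ u ∈ s, q t ∣ q u → t = u) {e : ι → ℕ} {d : α}
    (hd : ∀ t ∈ s, q t ^ e t ∣ d) : (∏ t ∈ s, q t ^ e t) ∣ d := by
  induction s using Finset.induction_on generalizing d with
  | empty => simp
  | insert a s ha ih =>
    rw [Finset.forall_mem_insert] at hq hd
    obtain ⟨d', rfl⟩ := hd.1
    rw [Finset.prod_insert ha]
    refine mul_dvd_mul_left _ (ih hq.2 (fun t ht u hu => hdvd t (mem_insert_of_mem ht) u
      (mem_insert_of_mem hu)) fun t ht => ?_)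
    have hta : ¬ q t ∣ q a ^ e a := fun h =>
      ha (hdvd t (mem_insert_of_mem ht) a (mem_insert_self a s)
        ((hq.2 t ht).dvd_of_dvd_pow h) ▸ ht)
    exact (hq.2 t ht).pow_dvd_of_dvd_mul_left _ hta (hd.2 t ht)

theorem Equiv.Perm.card_filter_sign_eq_one {α : Type*} [Fintype α] [DecidableEq α] [Nontrivial α] :
    (Finset.univ.filter fun z : Equiv.Perm α => Equiv.Perm.sign z = 1).card =
      (Fintype.card α).factorial / 2 := by
  rw [← card_alternatingGroup, ← Fintype.card_subtype]
  exact Fintype.card_congr' rfl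

namespace Stmt15

variable {n : ℕ}

open AddMonoidAlgebra

theorem permAct_mul (u v : Equiv.Perm (Fin n)) (a : A n) :
    permAct n (u * v) a = permAct n u (permAct n v a) := by
  rw [permAct, permAct, permAct, ← AlgEquiv.trans_apply, trans_domCongr_domCongr,
    Finsupp.domCongr_trans]
  rfl

theorem domCongr_swap_sub_mem_zmultiples (i j : Fin n) (m : Fin n →₀ ℤ) :
    Finsupp.domCongr (Equiv.swap i j) m - m ∈
      AddSubgroup.zmultiples (Finsupp.single i 1 - Finsupp.single j 1) := by
  refine ⟨m j - m i, ?_⟩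
  ext t
  simp only [Finsupp.coe_smul, Finsupp.coe_sub, Pi.smul_apply, Pi.sub_apply, Finsupp.single_apply,
    Int.zsmul_eq_mul, Finsupp.domCongr_apply, Finsupp.equivMapDomain_apply, Equiv.symm_swap,
    Equiv.swap_apply_def]
  split_ifs <;> grind

theorem associated_single_sub_one_xvar_sub_xvar (i j : Fin n) :
    Associated (single (Finsupp.single i 1 - Finsupp.single j 1) 1 - 1 : A n)
      (xvar j - xvar i) := by
  have hu : IsUnit (-xvar j : A n) := by
    refine (IsUnit.of_mul_eq_one (single (-Finsupp.single j 1) 1) ?_).neg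
    rw [xvar, single_mul_single, add_neg_cancel, mul_one, one_def]
  refine ⟨hu.unit, ?_⟩
  rw [IsUnit.unit_spec, xvar, xvar, mul_neg, sub_mul, single_mul_single, sub_add_cancel,
    mul_one, one_mul]
  ring

theorem prime_xvar_sub_xvar {i j : Fin n} (hij : i ≠ j) : Prime (xvar j - xvar i : A n) :=
  (associated_single_sub_one_xvar_sub_xvar i j).prime
    (prime_single_sub_one (l := -Finsupp.applyAddHom j) (by simp [hij]))

theorem xvar_sub_xvar_dvd_permAct_swap_sub (i j : Fin n) (a : A n) :
    xvar j - xvar i ∣ permAct n (Equiv.swap i j) a - a :=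
  (associated_single_sub_one_xvar_sub_xvar i j).dvd_iff_dvd_left.mp
    (single_sub_one_dvd_mapDomain_sub (domCongr_swap_sub_mem_zmultiples i j) a)

theorem eq_of_xvar_sub_xvar_dvd {i j k l : Fin n} (hij : i < j) (hkl : k < l)
    (h : xvar j - xvar i ∣ (xvar l - xvar k : A n)) : (i, j) = (k, l) := by
  rw [← (associated_single_sub_one_xvar_sub_xvar i j).dvd_iff_dvd_left,
    ← (associated_single_sub_one_xvar_sub_xvar k l).dvd_iff_dvd_right] at h
  obtain ⟨c, hc⟩ := mem_zmultiples_of_single_sub_one_dvd (l := -Finsupp.applyAddHom j)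
    (by simp [hij.ne]) h
  have hk := DFunLike.congr_fun hc k
  have hl := DFunLike.congr_fun hc l
  simp only [Finsupp.coe_smul, Finsupp.coe_sub, Pi.smul_apply, Pi.sub_apply, Finsupp.single_apply,
    Int.zsmul_eq_mul] at hk hl
  -- `c • (e_i - e_j) = e_k - e_l` at the coordinates `k` and `l` forces `k = i` and `l = j`
  grind

theorem xvar_sub_xvar_pow_dvd_det {i j : Fin n} (hij : i ≠ j) (f : Equiv.Perm (Fin n) → A n) :
    (xvar j - xvar i) ^ (n.factorial / 2) ∣
      Matrix.det (Matrix.of fun z y : Equiv.Perm (Fin n) => permAct n z (f y)) := by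
  have : Nontrivial (Fin n) := nontrivial_of_ne i j hij
  have h := Matrix.pow_card_dvd_det_of_dvd_sub_row (p := xvar j - xvar i)
    (σ := (Equiv.swap i j * ·)) (s := Finset.univ.filter fun z => Equiv.Perm.sign z = 1)
    (fun z hz => by simp_all [Equiv.Perm.sign_swap hij]) (Matrix.of fun z y => permAct n z (f y))
    (fun z _ y => by
      rw [Matrix.of_apply, Matrix.of_apply, permAct_mul, ← dvd_neg, neg_sub]
      exact xvar_sub_xvar_dvd_permAct_swap_sub i j _)
  rwa [Equiv.Perm.card_filter_sign_eq_one, Fintype.card_fin] at h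

theorem stmt15_general (n : ℕ) (f : Equiv.Perm (Fin n) → A n) :
    (∏ p ∈ Finset.univ.filter fun p : Fin n × Fin n => p.1 < p.2,
        (xvar p.2 - xvar p.1) ^ (Nat.factorial n / 2)) ∣
      Matrix.det (Matrix.of fun z y : Equiv.Perm (Fin n) => permAct n z (f y)) := by
  refine Finset.prod_pow_dvd_of_prime (fun p hp => ?_) (fun p hp q hq hpq => ?_) fun p hp => ?_
  · exact prime_xvar_sub_xvar (Finset.mem_filter.mp hp).2.ne
  · exact eq_of_xvar_sub_xvar_dvd (Finset.mem_filter.mp hp).2 (Finset.mem_filter.mp hq).2 hpq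
  · exact xvar_sub_xvar_pow_dvd_det (Finset.mem_filter.mp hp).2.ne f

theorem stmt15 (n : ℕ) (hn : 2 ≤ n) (f : Equiv.Perm (Fin n) → A n) :
    (∏ p ∈ Finset.univ.filter fun p : Fin n × Fin n => p.1 < p.2,
        (xvar p.2 - xvar p.1) ^ (Nat.factorial n / 2)) ∣
      Matrix.det (Matrix.of fun z y : Equiv.Perm (Fin n) => permAct n z (f y)) :=
  stmt15_general n f

end Stmt15
end
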